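/- arXiv:1703.05388 — 13 statements merged into one kernel-verified Lean document; each statement's English description precedes it below -/
import Mathlib

section
/- Let Ω_i ⊆ ℝ^{n_i} be nonempty closed convex sets with Ω = ∏_{i=1}^N Ω_i ⊆ ℝ^n (n = Σ n_i), F : ℝ^n → ℝ^n a map, A_i ∈ ℝ^{m×n_i}, A = [A_1, …, A_N] ∈ ℝ^{m×n}, b_i ∈ ℝ^m, b = Σ_i b_i, b̄ = col(b_1,…,b_N). Let L ∈ ℝ^{N×N} be symmetric positive semidefinite with L·1_N = 0 and kernel exactly span{1_N}, and set L̄ = L ⊗ I_m, Λ = diag(A_1, …, A_N) ∈ ℝ^{mN×n}. Define Ā(x, z̄, λ̄) = (F(x), 0, L̄λ̄ − b̄) and B̄(x, z̄, λ̄) = N_Ω(x) × {0} × N_{(ℝ₊^m)^N}(λ̄) + (−Λᵀλ̄, −L̄λ̄, Λx + L̄z̄). If 0 ∈ Ā(x*, z̄*, λ̄*) + B̄(x*, z̄*, λ̄*), then there exists λ* ∈ ℝ^m such that λ̄* = 1_N ⊗ λ* (all local multipliers are equal), 0 ∈ F(x*) − Aᵀλ* + N_Ω(x*), and 0 ∈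 Ax* − b + N_{ℝ₊^m}(λ*). -/
open scoped RealInnerProductSpace Pointwise Matrix

noncomputable section

/-- The normal cone of a set `Ω` at a point `x` (empty when `x ∉ Ω`). -/
def normalCone {E : Type*} [NormedAddCommGroup E] [InnerProductSpace ℝ E]
    (Ω : Set E) (x : E) : Set E :=
  {v | x ∈ Ω ∧ ∀ y ∈ Ω, ⟪v, y - x⟫ ≤ 0}

/-! From `0 ∈ Ā + B̄`, the second block gives `L̄λ̄* = 0`; as `ker L = span 1_N`, each coordinate of
the local multipliers is the same for all agents, i.e. `λ̄* = 1_N ⊗ λ*`, and then the first block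
is the stationarity condition because `Λᵀ(1_N ⊗ λ*) = Aᵀλ*`. Summing the third block over the
agents removes `L̄z̄*` (the columns of the symmetric `L` sum to zero, as `L 1_N = 0`) and leaves
`b − Ax*`; testing the normal cone of `(ℝ₊^m)^N` at `1_N ⊗ λ*` against the points `1_N ⊗ y`
shows that this sum lies in `N_{ℝ₊^m}(λ*)`. -/

namespace Set

theorem zero_mem_singleton_add_iff {G : Type*} [AddGroup G] {a : G} {s : Set G} :
    (0 : G) ∈ {a} + s ↔ -a ∈ s := by
  simp [singleton_add]

theorem zero_mem_singleton_add_prod_add_singleton_iff {α β γ : Type*}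
    [AddCommGroup α] [AddCommGroup β] [AddCommGroup γ] {a c : α × β × γ}
    {U : Set α} {W : Set γ} :
    (0 : α × β × γ) ∈ {a} + (U ×ˢ (({0} : Set β) ×ˢ W) + {c}) ↔
      -(a.1 + c.1) ∈ U ∧ a.2.1 + c.2.1 = 0 ∧ -(a.2.2 + c.2.2) ∈ W := by
  rw [add_left_comm, singleton_add_singleton, add_comm, zero_mem_singleton_add_iff]
  simp only [mem_prod, mem_singleton_iff, Prod.fst_neg, Prod.snd_neg, Prod.fst_add, Prod.snd_add,
    neg_eq_zero]

end Set

theorem Matrix.IsSymm.sum_sum_smul_eq_zero {ι R M : Type*} [Fintype ι] [CommRing R]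
    [AddCommMonoid M] [Module R M] {L : Matrix ι ι R} (hLsymm : L.IsSymm) (hLone : L.mulVec (fun _ => (1 : R)) = 0) (z : ι → M) :
    ∑ i, ∑ j, L i j • z j = 0 := by
  have hcol : ∀ j, ∑ i, L i j = 0 := fun j => by
    simpa [Matrix.mulVec, dotProduct, hLsymm.apply j] using congrFun hLone j
  rw [Finset.sum_comm]
  simp [← Finset.sum_smul, hcol]

theorem pairwise_eq_of_sum_smul_eq_zero {ι κ : Type*} [Fintype ι] {L : Matrix ι ι ℝ}
    (hLker : ∀ v : ι → ℝ, L.mulVec v = 0 → ∃ c : ℝ, v = fun _ => c)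
    {v : ι → EuclideanSpace ℝ κ} (hv : ∀ i, ∑ j, L i j • v j = 0) (i j : ι) : v i = v j := by
  ext k
  obtain ⟨c, hc⟩ := hLker (fun j => v j k) <| funext fun i => by
    simpa [Matrix.mulVec, dotProduct] using congrArg (· k) (hv i)
  exact (congrFun hc i).trans (congrFun hc j).symm

theorem exists_mem_forall_eq_of_pairwise_eq {ι E : Type*} {K : Set E} (hK : K.Nonempty)
    {v : ι → E} (hvK : ∀ i, v i ∈ K) (hv : ∀ i j, v i = v j) : ∃ μ ∈ K, ∀ i, v i = μ := by
  cases isEmpty_or_nonempty ι with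
  | inl _ => exact hK.imp fun μ hμ => ⟨hμ, isEmptyElim⟩
  | inr h => obtain ⟨j⟩ := h; exact ⟨v j, hvK j, fun i => hv i j⟩

theorem sum_mem_normalCone_of_forall_eq {ι E : Type*} [Fintype ι] [NormedAddCommGroup E]
    [InnerProductSpace ℝ E] {K : Set E} {w lam : PiLp 2 (fun _ : ι => E)} {μ : E} (hμ : μ ∈ K)
    (hlam : ∀ i, lam i = μ) (hw : w ∈ normalCone {v | ∀ i, v i ∈ K} lam) :
    ∑ i, w i ∈ normalCone K μ := by
  refine ⟨hμ, fun y hy => ?_⟩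
  have := hw.2 (WithLp.toLp 2 fun _ => y) fun _ => hy
  simpa [PiLp.inner_apply, hlam, sum_inner] using this

theorem zero_of_augmented_operators_gives_KKT_general
    (N m : ℕ) (n : Fin N → ℕ)
    (Ω : ∀ i : Fin N, Set (EuclideanSpace ℝ (Fin (n i))))
    (F : PiLp 2 (fun i : Fin N => EuclideanSpace ℝ (Fin (n i))) →
      PiLp 2 (fun i : Fin N => EuclideanSpace ℝ (Fin (n i))))
    (A : ∀ i : Fin N, EuclideanSpace ℝ (Fin (n i)) →ₗ[ℝ] EuclideanSpace ℝ (Fin m))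
    (b : Fin N → EuclideanSpace ℝ (Fin m))
    (L : Matrix (Fin N) (Fin N) ℝ)
    (hLsymm : L.IsSymm)
    (hLone : L.mulVec (fun _ => (1 : ℝ)) = 0)
    (hLker : ∀ v : Fin N → ℝ, L.mulVec v = 0 → ∃ c : ℝ, v = fun _ => c)
    -- `L̄ = L ⊗ I_m` acting on `ℝ^{mN}`
    (Lbar : PiLp 2 (fun _ : Fin N => EuclideanSpace ℝ (Fin m)) →
      PiLp 2 (fun _ : Fin N => EuclideanSpace ℝ (Fin m)))
    (hLbar : ∀ lam i, Lbar lam i = ∑ j, L i j • lam j)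
    -- `Λ = diag(A_1, …, A_N)` and its transpose
    (Λ : PiLp 2 (fun i : Fin N => EuclideanSpace ℝ (Fin (n i))) →
      PiLp 2 (fun _ : Fin N => EuclideanSpace ℝ (Fin m)))
    (hΛ : ∀ x i, Λ x i = A i (x i))
    (Λadj : PiLp 2 (fun _ : Fin N => EuclideanSpace ℝ (Fin m)) →
      PiLp 2 (fun i : Fin N => EuclideanSpace ℝ (Fin (n i))))
    (hΛadj : ∀ lam i, Λadj lam i = LinearMap.adjoint (A i) (lam i))
    (bbar : PiLp 2 (fun _ : Fin N => EuclideanSpace ℝ (Fin m)))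
    (hbbar : ∀ i, bbar i = b i)
    -- `Aᵀ = col(A_1ᵀ, …, A_Nᵀ)`, the transpose of `A = [A_1, …, A_N]`
    (Aadj : EuclideanSpace ℝ (Fin m) →
      PiLp 2 (fun i : Fin N => EuclideanSpace ℝ (Fin (n i))))
    (hAadj : ∀ lam i, Aadj lam i = LinearMap.adjoint (A i) lam)
    -- the operators `Ā` and `B̄`
    (Abar : PiLp 2 (fun i : Fin N => EuclideanSpace ℝ (Fin (n i))) ×
        PiLp 2 (fun _ : Fin N => EuclideanSpace ℝ (Fin m)) ×
        PiLp 2 (fun _ : Fin N => EuclideanSpace ℝ (Fin m)) →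
      PiLp 2 (fun i : Fin N => EuclideanSpace ℝ (Fin (n i))) ×
        PiLp 2 (fun _ : Fin N => EuclideanSpace ℝ (Fin m)) ×
        PiLp 2 (fun _ : Fin N => EuclideanSpace ℝ (Fin m)))
    (hAbar : ∀ p, Abar p = (F p.1, 0, Lbar p.2.2 - bbar))
    (Bbar : PiLp 2 (fun i : Fin N => EuclideanSpace ℝ (Fin (n i))) ×
        PiLp 2 (fun _ : Fin N => EuclideanSpace ℝ (Fin m)) ×
        PiLp 2 (fun _ : Fin N => EuclideanSpace ℝ (Fin m)) →
      Set (PiLp 2 (fun i : Fin N => EuclideanSpace ℝ (Fin (n i))) ×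
        PiLp 2 (fun _ : Fin N => EuclideanSpace ℝ (Fin m)) ×
        PiLp 2 (fun _ : Fin N => EuclideanSpace ℝ (Fin m))))
    (hBbar : ∀ p, Bbar p =
      (normalCone {x : PiLp 2 (fun i : Fin N => EuclideanSpace ℝ (Fin (n i))) |
            ∀ i, x i ∈ Ω i} p.1 ×ˢ
          (({0} : Set (PiLp 2 (fun _ : Fin N => EuclideanSpace ℝ (Fin m)))) ×ˢ
            normalCone {lam : PiLp 2 (fun _ : Fin N => EuclideanSpace ℝ (Fin m)) |
              ∀ i k, 0 ≤ lam i k} p.2.2)) +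
        {(-Λadj p.2.2, -Lbar p.2.2, Λ p.1 + Lbar p.2.1)})
    -- a zero of `Ā + B̄`
    (xstar : PiLp 2 (fun i : Fin N => EuclideanSpace ℝ (Fin (n i))))
    (zstar lamstar : PiLp 2 (fun _ : Fin N => EuclideanSpace ℝ (Fin m)))
    (hzero : (0 : PiLp 2 (fun i : Fin N => EuclideanSpace ℝ (Fin (n i))) ×
        PiLp 2 (fun _ : Fin N => EuclideanSpace ℝ (Fin m)) ×
        PiLp 2 (fun _ : Fin N => EuclideanSpace ℝ (Fin m))) ∈
      ({Abar (xstar, zstar, lamstar)} : Set _) + Bbar (xstar, zstar, lamstar)) :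
    ∃ lam : EuclideanSpace ℝ (Fin m),
      (∀ i, lamstar i = lam) ∧
      ((0 : PiLp 2 (fun i : Fin N => EuclideanSpace ℝ (Fin (n i)))) ∈
        ({F xstar - Aadj lam} :
          Set (PiLp 2 (fun i : Fin N => EuclideanSpace ℝ (Fin (n i))))) +
          normalCone {x : PiLp 2 (fun i : Fin N => EuclideanSpace ℝ (Fin (n i))) |
            ∀ i, x i ∈ Ω i} xstar) ∧
      ((0 : EuclideanSpace ℝ (Fin m)) ∈
        ({(∑ i, A i (xstar i)) - ∑ i, b i} : Set (EuclideanSpace ℝ (Fin m))) +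
          normalCone {v : EuclideanSpace ℝ (Fin m) | ∀ k, 0 ≤ v k} lam) := by
  rw [hBbar, hAbar, Set.zero_mem_singleton_add_prod_add_singleton_iff] at hzero
  obtain ⟨hu, hLbar_lam, hw⟩ := hzero
  dsimp only at hu hLbar_lam hw
  simp only [zero_add, neg_eq_zero] at hLbar_lam
  have hL_lam : ∀ i, ∑ j, L i j • lamstar j = 0 := fun i => by rw [← hLbar, hLbar_lam]; rfl
  obtain ⟨lam, hlamK, hlam⟩ := exists_mem_forall_eq_of_pairwise_eq
    (K := {v : EuclideanSpace ℝ (Fin m) | ∀ k, 0 ≤ v k}) ⟨0, fun _ => le_rfl⟩ hw.1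
    (pairwise_eq_of_sum_smul_eq_zero hLker hL_lam)
  refine ⟨lam, hlam, ?_, ?_⟩
  · rw [Set.zero_mem_singleton_add_iff]
    convert hu using 1
    ext i : 1
    simp [hAadj, hΛadj, hlam, sub_eq_add_neg]
  · rw [Set.zero_mem_singleton_add_iff]
    convert sum_mem_normalCone_of_forall_eq hlamK hlam hw using 1
    simp only [neg_sub, hLbar_lam, zero_sub, neg_add_rev, neg_neg, PiLp.add_apply, PiLp.neg_apply,
      hLbar, hΛ, hbbar, Finset.sum_add_distrib, Finset.sum_neg_distrib,
      hLsymm.sum_sum_smul_eq_zero hLone, neg_zero, zero_add]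
    abel

/-- Any zero of `Ā + B̄` yields consensus of the local multipliers
(`λ̄* = 1_N ⊗ λ*`) and a pair `(x*, λ*)` satisfying the KKT conditions of `VI(F, X)`. -/
theorem zero_of_augmented_operators_gives_KKT
    (N m : ℕ) (n : Fin N → ℕ)
    (Ω : ∀ i : Fin N, Set (EuclideanSpace ℝ (Fin (n i))))
    (hΩne : ∀ i, (Ω i).Nonempty) (hΩcl : ∀ i, IsClosed (Ω i)) (hΩcv : ∀ i, Convex ℝ (Ω i))
    (F : PiLp 2 (fun i : Fin N => EuclideanSpace ℝ (Fin (n i))) →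
      PiLp 2 (fun i : Fin N => EuclideanSpace ℝ (Fin (n i))))
    (A : ∀ i : Fin N, EuclideanSpace ℝ (Fin (n i)) →ₗ[ℝ] EuclideanSpace ℝ (Fin m))
    (b : Fin N → EuclideanSpace ℝ (Fin m))
    (L : Matrix (Fin N) (Fin N) ℝ)
    (hLsymm : L.IsSymm)
    (hLpsd : ∀ v : Fin N → ℝ, 0 ≤ v ⬝ᵥ L.mulVec v)
    (hLone : L.mulVec (fun _ => (1 : ℝ)) = 0)
    (hLker : ∀ v : Fin N → ℝ, L.mulVec v = 0 → ∃ c : ℝ, v = fun _ => c)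
    -- `L̄ = L ⊗ I_m` acting on `ℝ^{mN}`
    (Lbar : PiLp 2 (fun _ : Fin N => EuclideanSpace ℝ (Fin m)) →
      PiLp 2 (fun _ : Fin N => EuclideanSpace ℝ (Fin m)))
    (hLbar : ∀ lam i, Lbar lam i = ∑ j, L i j • lam j)
    -- `Λ = diag(A_1, …, A_N)` and its transpose
    (Λ : PiLp 2 (fun i : Fin N => EuclideanSpace ℝ (Fin (n i))) →
      PiLp 2 (fun _ : Fin N => EuclideanSpace ℝ (Fin m)))
    (hΛ : ∀ x i, Λ x i = A i (x i))
    (Λadj : PiLp 2 (fun _ : Fin N => EuclideanSpace ℝ (Fin m)) →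
      PiLp 2 (fun i : Fin N => EuclideanSpace ℝ (Fin (n i))))
    (hΛadj : ∀ lam i, Λadj lam i = LinearMap.adjoint (A i) (lam i))
    (bbar : PiLp 2 (fun _ : Fin N => EuclideanSpace ℝ (Fin m)))
    (hbbar : ∀ i, bbar i = b i)
    -- `Aᵀ = col(A_1ᵀ, …, A_Nᵀ)`, the transpose of `A = [A_1, …, A_N]`
    (Aadj : EuclideanSpace ℝ (Fin m) →
      PiLp 2 (fun i : Fin N => EuclideanSpace ℝ (Fin (n i))))
    (hAadj : ∀ lam i, Aadj lam i = LinearMap.adjoint (A i) lam)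
    -- the operators `Ā` and `B̄`
    (Abar : PiLp 2 (fun i : Fin N => EuclideanSpace ℝ (Fin (n i))) ×
        PiLp 2 (fun _ : Fin N => EuclideanSpace ℝ (Fin m)) ×
        PiLp 2 (fun _ : Fin N => EuclideanSpace ℝ (Fin m)) →
      PiLp 2 (fun i : Fin N => EuclideanSpace ℝ (Fin (n i))) ×
        PiLp 2 (fun _ : Fin N => EuclideanSpace ℝ (Fin m)) ×
        PiLp 2 (fun _ : Fin N => EuclideanSpace ℝ (Fin m)))
    (hAbar : ∀ p, Abar p = (F p.1, 0, Lbar p.2.2 - bbar))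
    (Bbar : PiLp 2 (fun i : Fin N => EuclideanSpace ℝ (Fin (n i))) ×
        PiLp 2 (fun _ : Fin N => EuclideanSpace ℝ (Fin m)) ×
        PiLp 2 (fun _ : Fin N => EuclideanSpace ℝ (Fin m)) →
      Set (PiLp 2 (fun i : Fin N => EuclideanSpace ℝ (Fin (n i))) ×
        PiLp 2 (fun _ : Fin N => EuclideanSpace ℝ (Fin m)) ×
        PiLp 2 (fun _ : Fin N => EuclideanSpace ℝ (Fin m))))
    (hBbar : ∀ p, Bbar p =
      (normalCone {x : PiLp 2 (fun i : Fin N => EuclideanSpace ℝ (Fin (n i))) |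
            ∀ i, x i ∈ Ω i} p.1 ×ˢ
          (({0} : Set (PiLp 2 (fun _ : Fin N => EuclideanSpace ℝ (Fin m)))) ×ˢ
            normalCone {lam : PiLp 2 (fun _ : Fin N => EuclideanSpace ℝ (Fin m)) |
              ∀ i k, 0 ≤ lam i k} p.2.2)) +
        {(-Λadj p.2.2, -Lbar p.2.2, Λ p.1 + Lbar p.2.1)})
    -- a zero of `Ā + B̄`
    (xstar : PiLp 2 (fun i : Fin N => EuclideanSpace ℝ (Fin (n i))))
    (zstar lamstar : PiLp 2 (fun _ : Fin N => EuclideanSpace ℝ (Fin m)))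
    (hzero : (0 : PiLp 2 (fun i : Fin N => EuclideanSpace ℝ (Fin (n i))) ×
        PiLp 2 (fun _ : Fin N => EuclideanSpace ℝ (Fin m)) ×
        PiLp 2 (fun _ : Fin N => EuclideanSpace ℝ (Fin m))) ∈
      ({Abar (xstar, zstar, lamstar)} : Set _) + Bbar (xstar, zstar, lamstar)) :
    ∃ lam : EuclideanSpace ℝ (Fin m),
      (∀ i, lamstar i = lam) ∧
      ((0 : PiLp 2 (fun i : Fin N => EuclideanSpace ℝ (Fin (n i)))) ∈
        ({F xstar - Aadj lam} :
          Set (PiLp 2 (fun i : Fin N => EuclideanSpace ℝ (Fin (n i))))) +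
          normalCone {x : PiLp 2 (fun i : Fin N => EuclideanSpace ℝ (Fin (n i))) |
            ∀ i, x i ∈ Ω i} xstar) ∧
      ((0 : EuclideanSpace ℝ (Fin m)) ∈
        ({(∑ i, A i (xstar i)) - ∑ i, b i} : Set (EuclideanSpace ℝ (Fin m))) +
          normalCone {v : EuclideanSpace ℝ (Fin m) | ∀ k, 0 ≤ v k} lam) :=
  zero_of_augmented_operators_gives_KKT_general N m n Ω F A b L hLsymm hLone hLker Lbar hLbar Λ hΛ
    Λadj hΛadj bbar hbbar Aadj hAadj Abar hAbar Bbar hBbar xstar zstar lamstar hzero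

end
end

section
/- Let Ω_i ⊆ ℝ^{n_i} be nonempty closed convex sets with Ω = ∏_{i=1}^N Ω_i ⊆ ℝ^n, F : ℝ^n → ℝ^n a map, A_i ∈ ℝ^{m×n_i}, A = [A_1, …, A_N], b_i ∈ ℝ^m, b = Σ_i b_i, b̄ = col(b_1,…,b_N), L ∈ ℝ^{N×N} symmetric positive semidefinite with L·1_N = 0 and kernel exactly span{1_N}, L̄ = L ⊗ I_m, Λ = diag(A_1, …, A_N). Define Ā(x, z̄, λ̄) = (F(x), 0, L̄λ̄ − b̄) and B̄(x, z̄, λ̄) = N_Ω(x) × {0} × N_{(ℝ₊^m)^N}(λ̄) + (−Λᵀλ̄, −L̄λ̄, Λx + L̄z̄). If there exist x* ∈ Ω and λ* ∈ ℝ₊^m satisfying the KKT conditions 0 ∈ F(x*) − Aᵀλ* + N_Ω(x*) and 0 ∈ Ax* − b + N_{ℝ₊^m}(λ*), then there exists z̄* ∈ ℝ^{mN} such that 0 ∈ Ā(x*, z̄*, 1_N ⊗ λ*) + B̄(x*, z̄*, 1_N ⊗ λ*); in particular the zero set of Ā + B̄ is nonempty. -/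
open scoped RealInnerProductSpace Pointwise Matrix

noncomputable section

/-! Split the multiplier `h ∈ N_{ℝ₊^m}(λ*)` of the coupling constraint equally among the
`N` blocks, `w̄ = 1_N ⊗ (h / N) ∈ N_{(ℝ₊^m)^N}(1_N ⊗ λ*)`. The third block of the inclusion
then asks for `L̄ z̄ = b̄ - Λ x* - w̄`, whose blocks sum to zero by the second KKT condition.
Since `L` is symmetric with kernel `span 1_N`, its range is `1_Nᗮ`, and hence `L̄ = L ⊗ I_m`
maps onto the block vectors with zero block sum. -/

open Matrix

theorem Matrix.IsSymm.exists_mulVec_eq {ι : Type*} [Fintype ι] [DecidableEq ι]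
    {L : Matrix ι ι ℝ} (hL : L.IsSymm) {v : ι → ℝ}
    (hv : ∀ u, L *ᵥ u = 0 → v ⬝ᵥ u = 0) : ∃ z, L *ᵥ z = v := by
  set T := toEuclideanLin L
  have hT : T.IsSymmetric := isSymmetric_toEuclideanLin_iff.mpr (isHermitian_iff_isSymm.mpr hL)
  have hvT : WithLp.toLp 2 v ∈ LinearMap.range T := by
    rw [← Submodule.orthogonal_orthogonal (LinearMap.range T), hT.orthogonal_range]
    intro u hu
    rw [EuclideanSpace.inner_eq_star_dotProduct]
    simpa [dotProduct_comm] using hv u.ofLp (congrArg WithLp.ofLp hu)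
  obtain ⟨z, hz⟩ := hvT
  exact ⟨z.ofLp, congrArg WithLp.ofLp hz⟩

theorem Matrix.exists_mulVec_eq_of_sum_eq_zero {ι : Type*} [Fintype ι] [DecidableEq ι]
    {L : Matrix ι ι ℝ} (hL : L.IsSymm) (hker : ∀ u, L *ᵥ u = 0 → ∃ c : ℝ, u = fun _ => c)
    {v : ι → ℝ} (hv : ∑ i, v i = 0) : ∃ z, L *ᵥ z = v :=
  hL.exists_mulVec_eq fun u hu => by
    obtain ⟨c, rfl⟩ := hker u hu
    simp [dotProduct, ← Finset.sum_mul, hv]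

theorem Matrix.exists_sum_smul_eq_of_sum_eq_zero {ι E : Type*} [Fintype ι] [DecidableEq ι]
    [AddCommGroup E] [Module ℝ E] {L : Matrix ι ι ℝ}
    (hL : ∀ u : ι → ℝ, ∑ i, u i = 0 → ∃ z, L *ᵥ z = u)
    {v : ι → E} (hv : ∑ i, v i = 0) : ∃ z : ι → E, ∀ i, ∑ j, L i j • z j = v i := by
  cases isEmpty_or_nonempty ι with
  | inl _ => exact ⟨0, isEmptyElim⟩
  | inr hne =>
    obtain ⟨i₀⟩ := hne
    choose u hu using fun i => hL (Pi.single i 1 - Pi.single i₀ 1) (by simp)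
    refine ⟨fun j => ∑ i, u i j • v i, fun k => ?_⟩
    calc ∑ j, L k j • ∑ i, u i j • v i = ∑ i, (L *ᵥ u i) k • v i := by
          simp only [mulVec, dotProduct, Finset.smul_sum, smul_smul, Finset.sum_smul]
          exact Finset.sum_comm
      _ = v k := by
          simp [hu, sub_smul, Finset.sum_sub_distrib, Pi.single_apply, hv]

theorem Matrix.sum_smul_eq_zero_of_mulVec_one_eq_zero {ι E : Type*} [Fintype ι]
    [AddCommMonoid E] [Module ℝ E] {L : Matrix ι ι ℝ} (hL : L *ᵥ (fun _ => 1) = 0) (i : ι)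
    (c : E) : ∑ j, L i j • c = 0 := by
  have hrow : ∑ j, L i j = 0 := by simpa [mulVec, dotProduct] using congrFun hL i
  rw [← Finset.sum_smul, hrow, zero_smul]

theorem Finset.sum_sub_inv_card_smul_sum {ι E : Type*} [Fintype ι] [AddCommGroup E]
    [Module ℝ E] (v : ι → E) : ∑ i, (v i - (Fintype.card ι : ℝ)⁻¹ • ∑ j, v j) = 0 := by
  cases isEmpty_or_nonempty ι with
  | inl _ => simp
  | inr _ =>
    rw [Finset.sum_sub_distrib, Finset.sum_const, Finset.card_univ,
      ← Nat.cast_smul_eq_nsmul ℝ, smul_smul, mul_inv_cancel₀ (by positivity), one_smul, sub_self]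

theorem smul_mem_normalCone {E : Type*} [NormedAddCommGroup E] [InnerProductSpace ℝ E]
    {S : Set E} {x v : E} (hv : v ∈ normalCone S x) {c : ℝ} (hc : 0 ≤ c) :
    c • v ∈ normalCone S x :=
  ⟨hv.1, fun y hy => by
    rw [real_inner_smul_left]
    exact mul_nonpos_of_nonneg_of_nonpos hc (hv.2 y hy)⟩

theorem mem_normalCone_pi {ι : Type*} [Fintype ι] {E : ι → Type*}
    [∀ i, NormedAddCommGroup (E i)] [∀ i, InnerProductSpace ℝ (E i)]
    {S : ∀ i, Set (E i)} {x w : PiLp 2 E} (hw : ∀ i, w i ∈ normalCone (S i) (x i)) :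
    w ∈ normalCone {y : PiLp 2 E | ∀ i, y i ∈ S i} x :=
  ⟨fun i => (hw i).1, fun y hy => by
    rw [PiLp.inner_apply]
    exact Finset.sum_nonpos fun i _ => (hw i).2 (y i) (hy i)⟩

theorem zero_mem_singleton_add_iff {G : Type*} [AddGroup G] {a : G} {S : Set G} :
    0 ∈ {a} + S ↔ -a ∈ S := by
  simp [Set.singleton_add]

theorem KKT_gives_zero_of_augmented_operators_general
    (N m : ℕ) (n : Fin N → ℕ)
    (Ω : ∀ i : Fin N, Set (EuclideanSpace ℝ (Fin (n i))))
    (F : PiLp 2 (fun i : Fin N => EuclideanSpace ℝ (Fin (n i))) →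
      PiLp 2 (fun i : Fin N => EuclideanSpace ℝ (Fin (n i))))
    (A : ∀ i : Fin N, EuclideanSpace ℝ (Fin (n i)) →ₗ[ℝ] EuclideanSpace ℝ (Fin m))
    (b : Fin N → EuclideanSpace ℝ (Fin m))
    (L : Matrix (Fin N) (Fin N) ℝ)
    (hLsymm : L.IsSymm)
    (hLone : L.mulVec (fun _ => (1 : ℝ)) = 0)
    (hLker : ∀ v : Fin N → ℝ, L.mulVec v = 0 → ∃ c : ℝ, v = fun _ => c)
    -- `L̄ = L ⊗ I_m` acting on `ℝ^{mN}`
    (Lbar : PiLp 2 (fun _ : Fin N => EuclideanSpace ℝ (Fin m)) →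
      PiLp 2 (fun _ : Fin N => EuclideanSpace ℝ (Fin m)))
    (hLbar : ∀ lam i, Lbar lam i = ∑ j, L i j • lam j)
    -- `Λ = diag(A_1, …, A_N)` and its transpose
    (Λ : PiLp 2 (fun i : Fin N => EuclideanSpace ℝ (Fin (n i))) →
      PiLp 2 (fun _ : Fin N => EuclideanSpace ℝ (Fin m)))
    (hΛ : ∀ x i, Λ x i = A i (x i))
    (Λadj : PiLp 2 (fun _ : Fin N => EuclideanSpace ℝ (Fin m)) →
      PiLp 2 (fun i : Fin N => EuclideanSpace ℝ (Fin (n i))))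
    (hΛadj : ∀ lam i, Λadj lam i = LinearMap.adjoint (A i) (lam i))
    (bbar : PiLp 2 (fun _ : Fin N => EuclideanSpace ℝ (Fin m)))
    (hbbar : ∀ i, bbar i = b i)
    -- `Aᵀ = col(A_1ᵀ, …, A_Nᵀ)`, the transpose of `A = [A_1, …, A_N]`
    (Aadj : EuclideanSpace ℝ (Fin m) →
      PiLp 2 (fun i : Fin N => EuclideanSpace ℝ (Fin (n i))))
    (hAadj : ∀ lam i, Aadj lam i = LinearMap.adjoint (A i) lam)
    -- the operators `Ā` and `B̄`
    (Abar : PiLp 2 (fun i : Fin N => EuclideanSpace ℝ (Fin (n i))) ×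
        PiLp 2 (fun _ : Fin N => EuclideanSpace ℝ (Fin m)) ×
        PiLp 2 (fun _ : Fin N => EuclideanSpace ℝ (Fin m)) →
      PiLp 2 (fun i : Fin N => EuclideanSpace ℝ (Fin (n i))) ×
        PiLp 2 (fun _ : Fin N => EuclideanSpace ℝ (Fin m)) ×
        PiLp 2 (fun _ : Fin N => EuclideanSpace ℝ (Fin m)))
    (hAbar : ∀ p, Abar p = (F p.1, 0, Lbar p.2.2 - bbar))
    (Bbar : PiLp 2 (fun i : Fin N => EuclideanSpace ℝ (Fin (n i))) ×
        PiLp 2 (fun _ : Fin N => EuclideanSpace ℝ (Fin m)) ×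
        PiLp 2 (fun _ : Fin N => EuclideanSpace ℝ (Fin m)) →
      Set (PiLp 2 (fun i : Fin N => EuclideanSpace ℝ (Fin (n i))) ×
        PiLp 2 (fun _ : Fin N => EuclideanSpace ℝ (Fin m)) ×
        PiLp 2 (fun _ : Fin N => EuclideanSpace ℝ (Fin m))))
    (hBbar : ∀ p, Bbar p =
      (normalCone {x : PiLp 2 (fun i : Fin N => EuclideanSpace ℝ (Fin (n i))) |
            ∀ i, x i ∈ Ω i} p.1 ×ˢ
          (({0} : Set (PiLp 2 (fun _ : Fin N => EuclideanSpace ℝ (Fin m)))) ×ˢ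
            normalCone {lam : PiLp 2 (fun _ : Fin N => EuclideanSpace ℝ (Fin m)) |
              ∀ i k, 0 ≤ lam i k} p.2.2)) +
        {(-Λadj p.2.2, -Lbar p.2.2, Λ p.1 + Lbar p.2.1)})
    -- a pair `(x*, λ*)` satisfying the KKT conditions
    (xstar : PiLp 2 (fun i : Fin N => EuclideanSpace ℝ (Fin (n i))))
    (lam : EuclideanSpace ℝ (Fin m))
    (hKKT1 : (0 : PiLp 2 (fun i : Fin N => EuclideanSpace ℝ (Fin (n i)))) ∈
      ({F xstar - Aadj lam} :
        Set (PiLp 2 (fun i : Fin N => EuclideanSpace ℝ (Fin (n i))))) +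
        normalCone {x : PiLp 2 (fun i : Fin N => EuclideanSpace ℝ (Fin (n i))) |
          ∀ i, x i ∈ Ω i} xstar)
    (hKKT2 : (0 : EuclideanSpace ℝ (Fin m)) ∈
      ({(∑ i, A i (xstar i)) - ∑ i, b i} : Set (EuclideanSpace ℝ (Fin m))) +
        normalCone {v : EuclideanSpace ℝ (Fin m) | ∀ k, 0 ≤ v k} lam)
    -- `1_N ⊗ λ*`, the stacked vector with all blocks equal to `λ*`
    (lamtile : PiLp 2 (fun _ : Fin N => EuclideanSpace ℝ (Fin m)))
    (hlamtile : ∀ i, lamtile i = lam) :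
    ∃ zbar : PiLp 2 (fun _ : Fin N => EuclideanSpace ℝ (Fin m)),
      (0 : PiLp 2 (fun i : Fin N => EuclideanSpace ℝ (Fin (n i))) ×
          PiLp 2 (fun _ : Fin N => EuclideanSpace ℝ (Fin m)) ×
          PiLp 2 (fun _ : Fin N => EuclideanSpace ℝ (Fin m))) ∈
        ({Abar (xstar, zbar, lamtile)} : Set _) + Bbar (xstar, zbar, lamtile) := by
  rw [zero_mem_singleton_add_iff] at hKKT1 hKKT2
  set r : Fin N → EuclideanSpace ℝ (Fin m) := fun i => b i - A i (xstar i)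
  rw [neg_sub, ← Finset.sum_sub_distrib] at hKKT2
  set w : PiLp 2 (fun _ : Fin N => EuclideanSpace ℝ (Fin m)) :=
    WithLp.toLp 2 fun _ => (N : ℝ)⁻¹ • ∑ i, r i
  have hw : w ∈ normalCone {lam | ∀ i k, 0 ≤ lam i k} lamtile :=
    mem_normalCone_pi (S := fun _ => {v : EuclideanSpace ℝ (Fin m) | ∀ k, 0 ≤ v k}) fun i => by
      rw [hlamtile]; exact smul_mem_normalCone hKKT2 (by positivity)
  obtain ⟨z, hz⟩ := exists_sum_smul_eq_of_sum_eq_zero (v := fun i => r i - w i)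
    (fun _ => exists_mulVec_eq_of_sum_eq_zero hLsymm hLker)
    (by simpa [w] using Finset.sum_sub_inv_card_smul_sum r)
  have hLz : ∀ i, Lbar (WithLp.toLp 2 z) i = r i - w i := by
    simpa [hLbar] using hz
  have hLlam : Lbar lamtile = 0 := PiLp.ext fun i => by
    simp [hLbar, hlamtile, sum_smul_eq_zero_of_mulVec_one_eq_zero hLone]
  have hΛlam : Λadj lamtile = Aadj lam := PiLp.ext fun i => by
    rw [hΛadj, hlamtile, hAadj]
  refine ⟨WithLp.toLp 2 z, ?_⟩
  rw [zero_mem_singleton_add_iff, hAbar, hBbar, Set.add_singleton]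
  refine ⟨(-(F xstar - Aadj lam), 0, w), ⟨hKKT1, rfl, hw⟩, ?_⟩
  change (-(F xstar - Aadj lam), 0, w) + (-Λadj lamtile, -Lbar lamtile, Λ xstar + Lbar _) =
    -(F xstar, 0, Lbar lamtile - bbar)
  rw [hΛlam, hLlam, Prod.mk_add_mk, Prod.mk_add_mk, Prod.neg_mk, Prod.neg_mk]
  refine Prod.ext (by abel) (Prod.ext (by simp) (PiLp.ext fun i => ?_))
  simp only [PiLp.add_apply, PiLp.neg_apply, PiLp.sub_apply, PiLp.zero_apply, hLz, hΛ, hbbar, r]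
  abel

/-- Any pair `(x*, λ*)` satisfying the KKT conditions of `VI(F, X)` gives
rise to a zero of the augmented operators: there exists `z̄*` with
`0 ∈ Ā(x*, z̄*, 1_N ⊗ λ*) + B̄(x*, z̄*, 1_N ⊗ λ*)`; in particular `zer(Ā + B̄) ≠ ∅`. -/
theorem KKT_gives_zero_of_augmented_operators
    (N m : ℕ) (n : Fin N → ℕ)
    (Ω : ∀ i : Fin N, Set (EuclideanSpace ℝ (Fin (n i))))
    (hΩne : ∀ i, (Ω i).Nonempty) (hΩcl : ∀ i, IsClosed (Ω i)) (hΩcv : ∀ i, Convex ℝ (Ω i))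
    (F : PiLp 2 (fun i : Fin N => EuclideanSpace ℝ (Fin (n i))) →
      PiLp 2 (fun i : Fin N => EuclideanSpace ℝ (Fin (n i))))
    (A : ∀ i : Fin N, EuclideanSpace ℝ (Fin (n i)) →ₗ[ℝ] EuclideanSpace ℝ (Fin m))
    (b : Fin N → EuclideanSpace ℝ (Fin m))
    (L : Matrix (Fin N) (Fin N) ℝ)
    (hLsymm : L.IsSymm)
    (hLpsd : ∀ v : Fin N → ℝ, 0 ≤ v ⬝ᵥ L.mulVec v)
    (hLone : L.mulVec (fun _ => (1 : ℝ)) = 0)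
    (hLker : ∀ v : Fin N → ℝ, L.mulVec v = 0 → ∃ c : ℝ, v = fun _ => c)
    -- `L̄ = L ⊗ I_m` acting on `ℝ^{mN}`
    (Lbar : PiLp 2 (fun _ : Fin N => EuclideanSpace ℝ (Fin m)) →
      PiLp 2 (fun _ : Fin N => EuclideanSpace ℝ (Fin m)))
    (hLbar : ∀ lam i, Lbar lam i = ∑ j, L i j • lam j)
    -- `Λ = diag(A_1, …, A_N)` and its transpose
    (Λ : PiLp 2 (fun i : Fin N => EuclideanSpace ℝ (Fin (n i))) →
      PiLp 2 (fun _ : Fin N => EuclideanSpace ℝ (Fin m)))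
    (hΛ : ∀ x i, Λ x i = A i (x i))
    (Λadj : PiLp 2 (fun _ : Fin N => EuclideanSpace ℝ (Fin m)) →
      PiLp 2 (fun i : Fin N => EuclideanSpace ℝ (Fin (n i))))
    (hΛadj : ∀ lam i, Λadj lam i = LinearMap.adjoint (A i) (lam i))
    (bbar : PiLp 2 (fun _ : Fin N => EuclideanSpace ℝ (Fin m)))
    (hbbar : ∀ i, bbar i = b i)
    -- `Aᵀ = col(A_1ᵀ, …, A_Nᵀ)`, the transpose of `A = [A_1, …, A_N]`
    (Aadj : EuclideanSpace ℝ (Fin m) →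
      PiLp 2 (fun i : Fin N => EuclideanSpace ℝ (Fin (n i))))
    (hAadj : ∀ lam i, Aadj lam i = LinearMap.adjoint (A i) lam)
    -- the operators `Ā` and `B̄`
    (Abar : PiLp 2 (fun i : Fin N => EuclideanSpace ℝ (Fin (n i))) ×
        PiLp 2 (fun _ : Fin N => EuclideanSpace ℝ (Fin m)) ×
        PiLp 2 (fun _ : Fin N => EuclideanSpace ℝ (Fin m)) →
      PiLp 2 (fun i : Fin N => EuclideanSpace ℝ (Fin (n i))) ×
        PiLp 2 (fun _ : Fin N => EuclideanSpace ℝ (Fin m)) ×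
        PiLp 2 (fun _ : Fin N => EuclideanSpace ℝ (Fin m)))
    (hAbar : ∀ p, Abar p = (F p.1, 0, Lbar p.2.2 - bbar))
    (Bbar : PiLp 2 (fun i : Fin N => EuclideanSpace ℝ (Fin (n i))) ×
        PiLp 2 (fun _ : Fin N => EuclideanSpace ℝ (Fin m)) ×
        PiLp 2 (fun _ : Fin N => EuclideanSpace ℝ (Fin m)) →
      Set (PiLp 2 (fun i : Fin N => EuclideanSpace ℝ (Fin (n i))) ×
        PiLp 2 (fun _ : Fin N => EuclideanSpace ℝ (Fin m)) ×
        PiLp 2 (fun _ : Fin N => EuclideanSpace ℝ (Fin m))))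
    (hBbar : ∀ p, Bbar p =
      (normalCone {x : PiLp 2 (fun i : Fin N => EuclideanSpace ℝ (Fin (n i))) |
            ∀ i, x i ∈ Ω i} p.1 ×ˢ
          (({0} : Set (PiLp 2 (fun _ : Fin N => EuclideanSpace ℝ (Fin m)))) ×ˢ
            normalCone {lam : PiLp 2 (fun _ : Fin N => EuclideanSpace ℝ (Fin m)) |
              ∀ i k, 0 ≤ lam i k} p.2.2)) +
        {(-Λadj p.2.2, -Lbar p.2.2, Λ p.1 + Lbar p.2.1)})
    -- a pair `(x*, λ*)` satisfying the KKT conditions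
    (xstar : PiLp 2 (fun i : Fin N => EuclideanSpace ℝ (Fin (n i))))
    (hxstar : ∀ i, xstar i ∈ Ω i)
    (lam : EuclideanSpace ℝ (Fin m))
    (hlam : ∀ k, 0 ≤ lam k)
    (hKKT1 : (0 : PiLp 2 (fun i : Fin N => EuclideanSpace ℝ (Fin (n i)))) ∈
      ({F xstar - Aadj lam} :
        Set (PiLp 2 (fun i : Fin N => EuclideanSpace ℝ (Fin (n i))))) +
        normalCone {x : PiLp 2 (fun i : Fin N => EuclideanSpace ℝ (Fin (n i))) |
          ∀ i, x i ∈ Ω i} xstar)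
    (hKKT2 : (0 : EuclideanSpace ℝ (Fin m)) ∈
      ({(∑ i, A i (xstar i)) - ∑ i, b i} : Set (EuclideanSpace ℝ (Fin m))) +
        normalCone {v : EuclideanSpace ℝ (Fin m) | ∀ k, 0 ≤ v k} lam)
    -- `1_N ⊗ λ*`, the stacked vector with all blocks equal to `λ*`
    (lamtile : PiLp 2 (fun _ : Fin N => EuclideanSpace ℝ (Fin m)))
    (hlamtile : ∀ i, lamtile i = lam) :
    ∃ zbar : PiLp 2 (fun _ : Fin N => EuclideanSpace ℝ (Fin m)),
      (0 : PiLp 2 (fun i : Fin N => EuclideanSpace ℝ (Fin (n i))) ×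
          PiLp 2 (fun _ : Fin N => EuclideanSpace ℝ (Fin m)) ×
          PiLp 2 (fun _ : Fin N => EuclideanSpace ℝ (Fin m))) ∈
        ({Abar (xstar, zbar, lamtile)} : Set _) + Bbar (xstar, zbar, lamtile) :=
  KKT_gives_zero_of_augmented_operators_general N m n Ω F A b L hLsymm hLone hLker Lbar hLbar Λ hΛ
    Λadj hΛadj bbar hbbar Aadj hAadj Abar hAbar Bbar hBbar xstar lam hKKT1 hKKT2 lamtile hlamtile
end
end

section
/- Let F : ℝ^n → ℝ^n be η-strongly monotone and θ-Lipschitz continuous on a set Ω ⊆ ℝ^n, let L̄ be a symmetric positive semidefinite matrix on ℝ^{mN} with operator norm ‖L̄‖₂ ≤ 2d* for some d* > 0, and let b̄ ∈ ℝ^{mN}. Define Ā : Ω × ℝ^{mN} × ℝ^{mN} → ℝ^n × ℝ^{mN} × ℝ^{mN} by Ā(x, z̄, λ̄) = (F(x), 0, L̄λ̄ − b̄). Then for every β with 0 < β ≤ min{1/(2d*), η/θ²}, the map Ā is β-cocoercive: β‖Ā(u) − Ā(v)‖² ≤ ⟨u − v, Ā(u) − Ā(v)⟩ for all u, v in Ω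 × ℝ^{mN} × ℝ^{mN}. -/
open scoped RealInnerProductSpace

noncomputable section

/-- The inner product on the product space `E × Z × Z` (sum of the componentwise
inner products). -/
def prodInner3 {E Z : Type*} [NormedAddCommGroup E] [InnerProductSpace ℝ E]
    [NormedAddCommGroup Z] [InnerProductSpace ℝ Z]
    (p q : E × Z × Z) : ℝ :=
  ⟪p.1, q.1⟫ + ⟪p.2.1, q.2.1⟫ + ⟪p.2.2, q.2.2⟫

lemma psd_cs {M : ℕ} (L : EuclideanSpace ℝ (Fin M) →L[ℝ] EuclideanSpace ℝ (Fin M))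
    (hsa : ∀ u v : EuclideanSpace ℝ (Fin M), ⟪L u, v⟫ = ⟪u, L v⟫)
    (hpsd : ∀ v : EuclideanSpace ℝ (Fin M), 0 ≤ ⟪L v, v⟫)
    (w : EuclideanSpace ℝ (Fin M)) :
    ‖L w‖ ^ 2 ≤ ‖L‖ * ⟪L w, w⟫ := by
  set a := ⟪L w, w⟫ with ha
  set b := ‖L w‖ ^ 2 with hb
  set c := ⟪L (L w), L w⟫ with hc
  have hquad : ∀ t : ℝ, 0 ≤ a + 2 * t * b + t ^ 2 * c := by
    intro t
    have := hpsd (w + t • L w)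
    have hexp : ⟪L (w + t • L w), w + t • L w⟫ = a + 2 * t * b + t ^ 2 * c := by
      simp only [map_add, map_smul, inner_add_left, inner_add_right,
        real_inner_smul_left, real_inner_smul_right]
      have h1 : ⟪L w, L w⟫ = b := real_inner_self_eq_norm_sq (L w)
      have h2 : ⟪L (L w), w⟫ = b := by rw [hsa]; exact real_inner_self_eq_norm_sq (L w)
      rw [h1, h2, ← ha, ← hc]; ring
    linarith [hexp ▸ this]
  have hb0 : 0 ≤ b := by positivity
  have ha0 : 0 ≤ a := hpsd w
  have hc0 : 0 ≤ c := hpsd (L w)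
  have hcb : c ≤ ‖L‖ * b := by
    calc c ≤ ‖L (L w)‖ * ‖L w‖ := real_inner_le_norm _ _
      _ ≤ (‖L‖ * ‖L w‖) * ‖L w‖ := by
          have := L.le_opNorm (L w)
          nlinarith [norm_nonneg (L w)]
      _ = ‖L‖ * b := by rw [hb]; ring
  have hbac : b ^ 2 ≤ a * c := by
    rcases eq_or_lt_of_le hc0 with hcz | hcpos
    · have hbz : b = 0 := by
        by_contra hbne
        have hbpos : 0 < b := lt_of_le_of_ne hb0 (Ne.symm hbne)
        have := hquad (-(a + 1) / (2 * b))
        rw [← hcz] at this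
        have : 0 ≤ a + 2 * (-(a + 1) / (2 * b)) * b := by linarith
        have h2 : 2 * (-(a + 1) / (2 * b)) * b = -(a + 1) := by field_simp
        linarith [h2 ▸ this]
      rw [hbz]; nlinarith
    · have := hquad (-b / c)
      have h2 : a + 2 * (-b / c) * b + (-b / c) ^ 2 * c = a - b ^ 2 / c := by
        field_simp; ring
      rw [h2] at this
      have : b ^ 2 / c ≤ a := by linarith
      calc b ^ 2 = (b ^ 2 / c) * c := by field_simp
        _ ≤ a * c := mul_le_mul_of_nonneg_right this hc0
  -- b^2 ≤ a*c ≤ a*(‖L‖*b), conclude b ≤ ‖L‖*a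
  rcases eq_or_lt_of_le hb0 with hbz | hbpos
  · rw [← hbz]; positivity
  · have : b ^ 2 ≤ a * (‖L‖ * b) := le_trans hbac (mul_le_mul_of_nonneg_left hcb ha0)
    nlinarith

/-- The operator `Ā(x, z̄, λ̄) = (F(x), 0, L̄λ̄ − b̄)` is `β`-cocoercive on
`Ω × ℝ^{mN} × ℝ^{mN}` for every `0 < β ≤ min{1/(2d*), η/θ²}`, where `F` is `η`-strongly
monotone and `θ`-Lipschitz on `Ω`, and `L̄` is symmetric positive semidefinite with
`‖L̄‖₂ ≤ 2d*`. -/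
theorem Abar_cocoercive
    (n M : ℕ)
    (F : EuclideanSpace ℝ (Fin n) → EuclideanSpace ℝ (Fin n))
    (Ω : Set (EuclideanSpace ℝ (Fin n)))
    (η θ : ℝ)
    (hmono : ∀ x ∈ Ω, ∀ y ∈ Ω, η * ‖x - y‖ ^ 2 ≤ ⟪F x - F y, x - y⟫)
    (hlip : ∀ x ∈ Ω, ∀ y ∈ Ω, ‖F x - F y‖ ≤ θ * ‖x - y‖)
    (Lbar : EuclideanSpace ℝ (Fin M) →L[ℝ] EuclideanSpace ℝ (Fin M))
    (hLsa : ∀ u v : EuclideanSpace ℝ (Fin M), ⟪Lbar u, v⟫ = ⟪u, Lbar v⟫)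
    (hLpsd : ∀ v : EuclideanSpace ℝ (Fin M), 0 ≤ ⟪Lbar v, v⟫)
    (dstar : ℝ) (hdstar : 0 < dstar) (hLnorm : ‖Lbar‖ ≤ 2 * dstar)
    (bbar : EuclideanSpace ℝ (Fin M))
    -- the operator `Ā`
    (Abar : EuclideanSpace ℝ (Fin n) × EuclideanSpace ℝ (Fin M) × EuclideanSpace ℝ (Fin M) →
      EuclideanSpace ℝ (Fin n) × EuclideanSpace ℝ (Fin M) × EuclideanSpace ℝ (Fin M))
    (hAbar : ∀ p, Abar p = (F p.1, 0, Lbar p.2.2 - bbar)) :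
    ∀ β : ℝ, 0 < β → β ≤ min (1 / (2 * dstar)) (η / θ ^ 2) →
      ∀ u v : EuclideanSpace ℝ (Fin n) × EuclideanSpace ℝ (Fin M) × EuclideanSpace ℝ (Fin M),
        u.1 ∈ Ω → v.1 ∈ Ω →
          β * prodInner3 (Abar u - Abar v) (Abar u - Abar v) ≤
            prodInner3 (u - v) (Abar u - Abar v) := by
  intro β hβ hβle u v hu hv
  have hβ1 : β ≤ 1 / (2 * dstar) := le_trans hβle (min_le_left _ _)
  have hβ2 : β ≤ η / θ ^ 2 := le_trans hβle (min_le_right _ _)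
  set x := u.1; set y := v.1
  set w : EuclideanSpace ℝ (Fin M) := u.2.2 - v.2.2 with hw
  have hA : Abar u - Abar v = (F x - F y, 0, Lbar w) := by
    rw [hAbar u, hAbar v, hw, map_sub, Prod.mk_sub_mk, Prod.mk_sub_mk, sub_zero]
    congr 2
    abel
  rw [hA]
  unfold prodInner3
  simp only [Prod.fst_sub, Prod.snd_sub, inner_zero_right]
  rw [real_inner_self_eq_norm_sq, real_inner_self_eq_norm_sq]
  -- First component bound
  have hθ : θ ≠ 0 := by
    rintro rfl
    simp at hβ2
    linarith
  have hθ2 : 0 < θ ^ 2 := by positivity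
  have hβθ : β * θ ^ 2 ≤ η := by
    exact (le_div_iff₀ hθ2).mp hβ2
  have hF1 : ‖F x - F y‖ ^ 2 ≤ θ ^ 2 * ‖x - y‖ ^ 2 := by
    have h := hlip x hu y hv
    nlinarith [norm_nonneg (F x - F y), norm_nonneg (x - y)]
  have hcomp1 : β * ‖F x - F y‖ ^ 2 ≤ ⟪x - y, F x - F y⟫ := by
    rw [real_inner_comm]
    have := hmono x hu y hv
    nlinarith [sq_nonneg ‖x - y‖]
  -- Third component bound
  have hcs := psd_cs Lbar hLsa hLpsd w
  have hpw : 0 ≤ ⟪Lbar w, w⟫ := hLpsd w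
  have hcomp3 : β * ‖Lbar w‖ ^ 2 ≤ ⟪w, Lbar w⟫ := by
    rw [← hLsa]
    have h1 : ‖Lbar w‖ ^ 2 ≤ 2 * dstar * ⟪Lbar w, w⟫ := by
      nlinarith [hcs, hpw, norm_nonneg Lbar]
    have hβd : β * (2 * dstar) ≤ 1 := by
      rw [le_div_iff₀ (by linarith : (0:ℝ) < 2 * dstar)] at hβ1
      linarith
    nlinarith [sq_nonneg ‖Lbar w‖]
  linarith

end
end

section
/- Let Ω ⊆ ℝ^n be a nonempty closed convex set, let L̄ be a symmetric matrix on ℝ^{mN}, and let Λ ∈ ℝ^{mN×n}. Define the set-valued operator B̄ on ℝ^n × ℝ^{mN} × ℝ^{mN} by B̄(x, z̄, λ̄) = N_Ω(x) × {0} × N_{(ℝ₊^m)^N}(λ̄) + (−Λᵀλ̄, −L̄λ̄, Λx + L̄z̄). Then B̄ is maximally monotone: it is monotone, and whenever a pair (w, v) satisfies ⟨u − w, p − v⟩ ≥ 0 for all u and all p ∈ B̄(u), one has v ∈ B̄(w). -/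
open scoped RealInnerProductSpace Pointwise

noncomputable section

/-- Monotonicity of the normal cone. -/
lemma normalCone_mono {E : Type*} [NormedAddCommGroup E] [InnerProductSpace ℝ E]
    {C : Set E} {p q v w : E} (hv : v ∈ normalCone C p) (hw : w ∈ normalCone C q) :
    0 ≤ ⟪p - q, v - w⟫ := by
  have h1 := hv.2 q hw.1
  have h2 := hw.2 p hv.1
  have c1 : ⟪p - q, v⟫ = ⟪v, p - q⟫ := real_inner_comm _ _
  have c2 : ⟪p - q, w⟫ = ⟪w, p - q⟫ := real_inner_comm _ _
  have c3 : ⟪v, q - p⟫ = -⟪v, p - q⟫ := by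
    rw [show (q - p : E) = -(p - q) by abel, inner_neg_right]
  rw [inner_sub_right]
  linarith

/-- Projection onto a nonempty closed convex set, with variational characterization. -/
lemma exists_proj {E : Type*} [NormedAddCommGroup E] [InnerProductSpace ℝ E]
    [CompleteSpace E] {C : Set E} (hne : C.Nonempty) (hcl : IsClosed C)
    (hcv : Convex ℝ C) (z : E) :
    ∃ p ∈ C, z - p ∈ normalCone C p := by
  obtain ⟨p, hpC, hp⟩ := exists_norm_eq_iInf_of_complete_convex hne hcl.isComplete hcv z
  exact ⟨p, hpC, hpC, (norm_eq_iInf_iff_real_inner_le_zero hcv hpC).1 hp⟩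

lemma mem_add_singleton' {E : Type*} [AddGroup E] (s : Set E) (a u : E) :
    u ∈ s + {a} ↔ u - a ∈ s := by
  simp [Set.add_singleton, sub_eq_iff_eq_add, sub_eq_add_neg]

/-- The operator
`B̄(x, z̄, λ̄) = N_Ω(x) × {0} × N_{(ℝ₊^m)^N}(λ̄) + (−Λᵀλ̄, −L̄λ̄, Λx + L̄z̄)`
is maximally monotone on `ℝ^n × ℝ^{mN} × ℝ^{mN}`. -/
theorem Bbar_maximally_monotone
    (n m N : ℕ)
    (Ω : Set (EuclideanSpace ℝ (Fin n)))
    (hΩne : Ω.Nonempty) (hΩcl : IsClosed Ω) (hΩcv : Convex ℝ Ω)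
    (Lbar : EuclideanSpace ℝ (Fin N × Fin m) →ₗ[ℝ] EuclideanSpace ℝ (Fin N × Fin m))
    (hLsa : ∀ u v : EuclideanSpace ℝ (Fin N × Fin m), ⟪Lbar u, v⟫ = ⟪u, Lbar v⟫)
    (Λ : EuclideanSpace ℝ (Fin n) →ₗ[ℝ] EuclideanSpace ℝ (Fin N × Fin m))
    -- the set-valued operator `B̄`
    (Bbar : EuclideanSpace ℝ (Fin n) × EuclideanSpace ℝ (Fin N × Fin m) ×
        EuclideanSpace ℝ (Fin N × Fin m) →
      Set (EuclideanSpace ℝ (Fin n) × EuclideanSpace ℝ (Fin N × Fin m) ×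
        EuclideanSpace ℝ (Fin N × Fin m)))
    (hBbar : ∀ p, Bbar p =
      (normalCone Ω p.1 ×ˢ
          (({0} : Set (EuclideanSpace ℝ (Fin N × Fin m))) ×ˢ
            normalCone {v : EuclideanSpace ℝ (Fin N × Fin m) | ∀ q, 0 ≤ v q} p.2.2)) +
        {(-(LinearMap.adjoint Λ) p.2.2, -Lbar p.2.2, Λ p.1 + Lbar p.2.1)}) :
    (∀ p q, ∀ u ∈ Bbar p, ∀ v ∈ Bbar q, 0 ≤ prodInner3 (p - q) (u - v)) ∧
      (∀ q v, (∀ p, ∀ u ∈ Bbar p, 0 ≤ prodInner3 (p - q) (u - v)) → v ∈ Bbar q) := by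
  set K : Set (EuclideanSpace ℝ (Fin N × Fin m)) :=
    {v : EuclideanSpace ℝ (Fin N × Fin m) | ∀ q, 0 ≤ v q} with hK
  set S : EuclideanSpace ℝ (Fin n) × EuclideanSpace ℝ (Fin N × Fin m) ×
      EuclideanSpace ℝ (Fin N × Fin m) →
      EuclideanSpace ℝ (Fin n) × EuclideanSpace ℝ (Fin N × Fin m) ×
      EuclideanSpace ℝ (Fin N × Fin m) :=
    fun p => (-(LinearMap.adjoint Λ) p.2.2, -Lbar p.2.2, Λ p.1 + Lbar p.2.1) with hS
  -- membership characterization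
  have hmem : ∀ p u, u ∈ Bbar p ↔
      ((u - S p).1 ∈ normalCone Ω p.1 ∧ (u - S p).2.1 = 0 ∧
        (u - S p).2.2 ∈ normalCone K p.2.2) := by
    intro p u
    rw [hBbar p]
    rw [show ({(-(LinearMap.adjoint Λ) p.2.2, -Lbar p.2.2, Λ p.1 + Lbar p.2.1)} :
        Set (EuclideanSpace ℝ (Fin n) × EuclideanSpace ℝ (Fin N × Fin m) ×
        EuclideanSpace ℝ (Fin N × Fin m))) = {S p} from rfl, mem_add_singleton',
      Set.mem_prod, Set.mem_prod, Set.mem_singleton_iff]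
  -- skewness of S
  have hskew : ∀ r, prodInner3 r (S r) = 0 := by
    intro r
    simp only [prodInner3, hS, inner_neg_right, inner_add_right,
      LinearMap.adjoint_inner_right]
    have hc : ⟪r.2.1, Lbar r.2.2⟫ = ⟪r.2.2, Lbar r.2.1⟫ := by
      rw [← hLsa]; exact real_inner_comm _ _
    have hc2 : ⟪Λ r.1, r.2.2⟫ = ⟪r.2.2, Λ r.1⟫ := real_inner_comm _ _
    linarith [hc, hc2]
  have hSlin : ∀ p q, S p - S q = S (p - q) := by
    intro p q
    simp only [hS, Prod.mk_sub_mk, Prod.fst_sub, Prod.snd_sub, map_sub, Prod.ext_iff]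
    refine ⟨by abel, by abel, by abel⟩
  -- bilinearity
  have hbil : ∀ r a b : EuclideanSpace ℝ (Fin n) × EuclideanSpace ℝ (Fin N × Fin m) ×
      EuclideanSpace ℝ (Fin N × Fin m), prodInner3 r (a + b) = prodInner3 r a + prodInner3 r b := by
    intro r a b
    simp only [prodInner3, Prod.fst_add, Prod.snd_add]
    rw [inner_add_right, inner_add_right, inner_add_right]
    ring
  constructor
  · -- monotonicity
    intro p q u hu v hv
    rw [hmem] at hu hv
    have key : prodInner3 (p - q) (u - v)
        = prodInner3 (p - q) ((u - S p) - (v - S q)) + prodInner3 (p - q) (S (p - q)) := by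
      rw [show u - v = ((u - S p) - (v - S q)) + (S p - S q) by abel, hbil, hSlin]
    rw [key, hskew, add_zero]
    have h1 : (0:ℝ) ≤ ⟪(p - q).1, ((u - S p) - (v - S q)).1⟫ := by
      have := normalCone_mono hu.1 hv.1
      simpa using this
    have h3 : (0:ℝ) ≤ ⟪(p - q).2.2, ((u - S p) - (v - S q)).2.2⟫ := by
      have := normalCone_mono hu.2.2 hv.2.2
      simpa using this
    have h2 : ((u - S p) - (v - S q)).2.1 = 0 := by
      have e1 := hu.2.1; have e2 := hv.2.1
      simp only [Prod.snd_sub, Prod.fst_sub] at e1 e2 ⊢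
      rw [e1, e2, sub_zero]
    simp only [prodInner3]
    rw [h2, inner_zero_right]
    linarith
  · -- maximality
    intro q v h
    have hKne : K.Nonempty := ⟨0, fun i => by simp⟩
    have hKcl : IsClosed K := by
      have e : K = ⋂ i, {v : EuclideanSpace ℝ (Fin N × Fin m) | 0 ≤ v i} := by
        ext v; simp [hK]
      rw [e]
      exact isClosed_iInter fun i =>
        isClosed_le continuous_const (EuclideanSpace.proj i).continuous
    have hKcv : Convex ℝ K := by
      intro a ha b hb s t hs ht hst i
      have e : (s • a + t • b) i = s * a i + t * b i := by
        simp [PiLp.add_apply, PiLp.smul_apply, smul_eq_mul]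
      rw [e]
      have := ha i; have := hb i
      positivity
    set w := v - S q with hw
    have h' : ∀ p a, a.1 ∈ normalCone Ω p.1 → a.2.1 = 0 →
        a.2.2 ∈ normalCone K p.2.2 → 0 ≤ prodInner3 (p - q) (a - w) := by
      intro p a h1 h2 h3
      have hu : a + S p ∈ Bbar p := by
        rw [hmem]
        simpa using ⟨h1, h2, h3⟩
      have hge := h p (a + S p) hu
      have key : prodInner3 (p - q) (a + S p - v)
          = prodInner3 (p - q) (a - w) + prodInner3 (p - q) (S (p - q)) := by
        rw [show a + S p - v = (a - w) + (S p - S q) by rw [hw]; abel, hbil, hSlin]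
      rw [key, hskew, add_zero] at hge
      exact hge
    obtain ⟨p1, hp1C, hp1⟩ := exists_proj hΩne hΩcl hΩcv (q.1 + w.1)
    obtain ⟨p3, hp3C, hp3⟩ := exists_proj hKne hKcl hKcv (q.2.2 + w.2.2)
    have step1 := h' (p1, q.2.1, p3) (q.1 + w.1 - p1, 0, q.2.2 + w.2.2 - p3) hp1 rfl hp3
    have estep : prodInner3 ((p1, q.2.1, p3) - q)
        ((q.1 + w.1 - p1, 0, q.2.2 + w.2.2 - p3) - w)
        = -⟪p1 - q.1, p1 - q.1⟫ - ⟪p3 - q.2.2, p3 - q.2.2⟫ := by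
      simp only [prodInner3, Prod.fst_sub, Prod.snd_sub]
      rw [show (q.1 + w.1 - p1 - w.1 : EuclideanSpace ℝ (Fin n)) = -(p1 - q.1) by abel,
        show (q.2.2 + w.2.2 - p3 - w.2.2 : EuclideanSpace ℝ (Fin N × Fin m))
          = -(p3 - q.2.2) by abel,
        show ((q.2.1 : EuclideanSpace ℝ (Fin N × Fin m)) - q.2.1) = 0 by abel]
      simp only [inner_neg_right, inner_zero_left]
      ring
    rw [estep] at step1
    have n1 : (0:ℝ) ≤ ⟪p1 - q.1, p1 - q.1⟫ := real_inner_self_nonneg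
    have n3 : (0:ℝ) ≤ ⟪p3 - q.2.2, p3 - q.2.2⟫ := real_inner_self_nonneg
    have hp1q : p1 = q.1 := by
      have z1 : ⟪p1 - q.1, p1 - q.1⟫ = (0:ℝ) := by linarith
      have := inner_self_eq_zero.1 z1; rwa [sub_eq_zero] at this
    have hp3q : p3 = q.2.2 := by
      have z3 : ⟪p3 - q.2.2, p3 - q.2.2⟫ = (0:ℝ) := by linarith
      have := inner_self_eq_zero.1 z3; rwa [sub_eq_zero] at this
    have hw1 : w.1 ∈ normalCone Ω q.1 := by
      rw [hp1q] at hp1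
      rwa [show (q.1 + w.1 - q.1 : EuclideanSpace ℝ (Fin n)) = w.1 by abel] at hp1
    have hw3 : w.2.2 ∈ normalCone K q.2.2 := by
      rw [hp3q] at hp3
      rwa [show (q.2.2 + w.2.2 - q.2.2 : EuclideanSpace ℝ (Fin N × Fin m)) = w.2.2
        by abel] at hp3
    have hq1 : q.1 ∈ Ω := hw1.1
    have hq3 : q.2.2 ∈ K := hw3.1
    have hzero1 : (0 : EuclideanSpace ℝ (Fin n)) ∈ normalCone Ω q.1 :=
      ⟨hq1, fun y _ => by simp⟩
    have hzero3 : (0 : EuclideanSpace ℝ (Fin N × Fin m)) ∈ normalCone K q.2.2 :=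
      ⟨hq3, fun y _ => by simp⟩
    have step2 := h' (q.1, q.2.1 + w.2.1, q.2.2) (0, 0, 0) hzero1 rfl hzero3
    have estep2 : prodInner3 ((q.1, q.2.1 + w.2.1, q.2.2) - q) ((0, 0, 0) - w)
        = -⟪w.2.1, w.2.1⟫ := by
      simp only [prodInner3, Prod.fst_sub, Prod.snd_sub]
      rw [show ((q.1 : EuclideanSpace ℝ (Fin n)) - q.1) = 0 by abel,
        show ((q.2.2 : EuclideanSpace ℝ (Fin N × Fin m)) - q.2.2) = 0 by abel,
        show (q.2.1 + w.2.1 - q.2.1 : EuclideanSpace ℝ (Fin N × Fin m)) = w.2.1 by abel,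
        show ((0 : EuclideanSpace ℝ (Fin N × Fin m)) - w.2.1) = -w.2.1 by abel]
      simp only [inner_neg_right, inner_zero_left]
      ring
    rw [estep2] at step2
    have hw2 : w.2.1 = 0 := by
      have hnn : (0:ℝ) ≤ ⟪w.2.1, w.2.1⟫ := real_inner_self_nonneg
      have z : ⟪w.2.1, w.2.1⟫ = (0:ℝ) := by linarith
      exact inner_self_eq_zero.1 z
    rw [hmem]
    exact ⟨hw1, hw2, hw3⟩

end
end

section
/- Let δ > 0, let τ̄ = diag{τ_1 I_{n_1}, …, τ_N I_{n_N}}, ν̄ = diag{ν_1 I_m, …, ν_N I_m}, σ̄ = diag{σ_1 I_m, …, σ_N I_m} with τ_i, ν_i, σ_i > 0, let A_i ∈ ℝ^{m×n_i}, Λ = diag(A_1, …, A_N) ∈ ℝ^{mN×n}, and let L ∈ ℝ^{N×N} be a symmetric matrix with nonnegative off-diagonal row sums Σ_j |L_{ij}| = 2d_i for each i, L̄ = L ⊗ I_m. Define the symmetric block matrix Φ = [[τ̄⁻¹, 0, Λᵀ], [0, ν̄⁻¹, L̄], [Λ, L̄, σ̄⁻¹]]. If for every i: τ_i ≤ 1/(max_{j=1,…,n_i}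 Σ_{k=1}^m |[A_iᵀ]_{jk}| + δ), ν_i ≤ 1/(2d_i + δ), and σ_i ≤ 1/(max_{j=1,…,m} Σ_{k=1}^{n_i} |[A_i]_{jk}| + 2d_i + δ), then Φ − δ I_{n+2mN} is positive semidefinite (hence Φ is positive definite). -/
/-!
Each row of `Φ - δ • 1` is weakly diagonally dominant: the step-size conditions bound the
off-diagonal absolute row sums `∑ₖ |Aᵢₖⱼ|`, `2dᵢ` and `∑ⱼ |Aᵢₖⱼ| + 2dᵢ` of `Φ` by
`1/τᵢ - δ`, `1/νᵢ - δ` and `1/σᵢ - δ`. By Gershgorin's circle theorem every eigenvalue of the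
symmetric matrix `Φ - δ • 1` is then nonnegative, and `Φ = (Φ - δ • 1) + δ • 1` is positive
definite.
-/

noncomputable section

/-- The preconditioning matrix `Φ = [[τ̄⁻¹, 0, Λᵀ], [0, ν̄⁻¹, L̄], [Λ, L̄, σ̄⁻¹]]`, written
entrywise over the index type `(Σ i, Fin (n i)) ⊕ ((Fin N × Fin m) ⊕ (Fin N × Fin m))`,
where `Λ = diag(A_1, …, A_N)` and `L̄ = L ⊗ I_m`. -/
def precondPhi (N m : ℕ) (n : Fin N → ℕ)
    (A : ∀ i : Fin N, Matrix (Fin m) (Fin (n i)) ℝ)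
    (τ ν σ : Fin N → ℝ) (L : Matrix (Fin N) (Fin N) ℝ) :
    Matrix ((Σ i : Fin N, Fin (n i)) ⊕ ((Fin N × Fin m) ⊕ (Fin N × Fin m)))
      ((Σ i : Fin N, Fin (n i)) ⊕ ((Fin N × Fin m) ⊕ (Fin N × Fin m))) ℝ :=
  Matrix.of fun r c =>
    match r, c with
    | .inl p, .inl q => if p = q then 1 / τ p.1 else 0
    | .inl _, .inr (.inl _) => 0
    | .inl p, .inr (.inr (i, k)) => if p.1 = i then A p.1 k p.2 else 0
    | .inr (.inl _), .inl _ => 0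
    | .inr (.inl (i, k)), .inr (.inl (i', k')) => if (i, k) = (i', k') then 1 / ν i else 0
    | .inr (.inl (i, k)), .inr (.inr (i', k')) => if k = k' then L i i' else 0
    | .inr (.inr (i, k)), .inl q => if i = q.1 then A q.1 k q.2 else 0
    | .inr (.inr (i, k)), .inr (.inl (i', k')) => if k = k' then L i i' else 0
    | .inr (.inr (i, k)), .inr (.inr (i', k')) => if (i, k) = (i', k') then 1 / σ i else 0

open Finset Matrix

namespace Matrix

section

variable {n : Type*} [Fintype n] [DecidableEq n] {A : Matrix n n ℝ}

theorem IsSymm.posSemidef_of_sum_abs_offDiag_le (hA : A.IsSymm)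
    (hdom : ∀ i, ∑ j ∈ univ.erase i, |A i j| ≤ A i i) : A.PosSemidef := by
  have hH : A.IsHermitian := hA
  refine hH.posSemidef_iff_eigenvalues_nonneg.mpr fun i => show 0 ≤ _ from ?_
  have hμ : Module.End.HasEigenvalue (toLin' A) (hH.eigenvalues i) := by
    rw [Module.End.hasEigenvalue_iff_mem_spectrum, spectrum_toLin']
    exact hH.eigenvalues_mem_spectrum_real i
  obtain ⟨k, hk⟩ := eigenvalue_mem_ball hμ
  rw [Metric.mem_closedBall, Real.dist_eq] at hk
  simp only [Real.norm_eq_abs] at hk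
  linarith [neg_abs_le (hH.eigenvalues i - A k k), hdom k]

theorem IsSymm.posSemidef_sub_smul_one (hA : A.IsSymm) {δ : ℝ}
    (hdom : ∀ i, ∑ j ∈ univ.erase i, |A i j| + δ ≤ A i i) : (A - δ • 1).PosSemidef := by
  refine (hA.sub (isSymm_one.smul δ)).posSemidef_of_sum_abs_offDiag_le fun i => ?_
  have hoff : ∀ j ∈ univ.erase i, |(A - δ • 1) i j| = |A i j| := fun j hj => by
    simp [Ne.symm (ne_of_mem_erase hj)]
  rw [sum_congr rfl hoff]
  simpa [le_sub_iff_add_le] using hdom i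

end

theorem PosSemidef.posDef_of_sub_smul_one {n : Type*} [Fintype n] [DecidableEq n]
    {A : Matrix n n ℝ} {δ : ℝ} (h : (A - δ • 1).PosSemidef) (hδ : 0 < δ) : A.PosDef := by
  simpa using (PosDef.one.smul hδ).add_posSemidef h

end Matrix

theorem le_one_div_of_le_of_le_one_div {b s t : ℝ} (hb : 0 < b) (ht : 0 < t) (hbs : b ≤ s)
    (hts : t ≤ 1 / s) : b ≤ 1 / t :=
  hbs.trans ((le_one_div ht (hb.trans_le hbs)).mp hts)

section

variable {N m : ℕ} {n : Fin N → ℕ} (A : ∀ i : Fin N, Matrix (Fin m) (Fin (n i)) ℝ)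
  (τ ν σ : Fin N → ℝ) (L : Matrix (Fin N) (Fin N) ℝ)

theorem precondPhi_isSymm (hL : L.IsSymm) : (precondPhi N m n A τ ν σ L).IsSymm := by
  ext (p | ⟨i, k⟩ | ⟨i, k⟩) (q | ⟨i', k'⟩ | ⟨i', k'⟩) <;>
    simp only [transpose_apply, precondPhi, of_apply, Prod.mk.injEq]
  all_goals split_ifs <;> simp_all [hL.apply]

theorem precondPhi_inl_inl_self (p : Σ i, Fin (n i)) :
    precondPhi N m n A τ ν σ L (.inl p) (.inl p) = 1 / τ p.1 := by
  simp [precondPhi]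

theorem precondPhi_inr_inl_self (i : Fin N) (k : Fin m) :
    precondPhi N m n A τ ν σ L (.inr (.inl (i, k))) (.inr (.inl (i, k))) = 1 / ν i := by
  simp [precondPhi]

theorem precondPhi_inr_inr_self (i : Fin N) (k : Fin m) :
    precondPhi N m n A τ ν σ L (.inr (.inr (i, k))) (.inr (.inr (i, k))) = 1 / σ i := by
  simp [precondPhi]

theorem sum_abs_precondPhi_inl_offDiag (p : Σ i, Fin (n i)) :
    ∑ c ∈ univ.erase (.inl p), |precondPhi N m n A τ ν σ L (.inl p) c| = ∑ k, |A p.1 k p.2| := by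
  rw [sum_erase_eq_sub (mem_univ _), Fintype.sum_sum_type, Fintype.sum_sum_type,
    Fintype.sum_prod_type, Fintype.sum_prod_type]
  simp [precondPhi, apply_ite abs, Sigma.ext_iff]

theorem sum_abs_precondPhi_inr_inl_offDiag (i : Fin N) (k : Fin m) :
    ∑ c ∈ univ.erase (.inr (.inl (i, k))), |precondPhi N m n A τ ν σ L (.inr (.inl (i, k))) c| =
      ∑ j, |L i j| := by
  rw [sum_erase_eq_sub (mem_univ _), Fintype.sum_sum_type, Fintype.sum_sum_type,
    Fintype.sum_prod_type, Fintype.sum_prod_type]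
  simp [precondPhi, apply_ite abs, Prod.ext_iff, ite_and, sum_ite_irrel]

theorem sum_abs_precondPhi_inr_inr_offDiag (i : Fin N) (k : Fin m) :
    ∑ c ∈ univ.erase (.inr (.inr (i, k))), |precondPhi N m n A τ ν σ L (.inr (.inr (i, k))) c| =
      ∑ j, |A i k j| + ∑ j, |L i j| := by
  rw [sum_erase_eq_sub (mem_univ _), Fintype.sum_sum_type, Fintype.sum_sum_type,
    Fintype.sum_prod_type, Fintype.sum_prod_type, ← univ_sigma_univ, sum_sigma]
  simp [precondPhi, apply_ite abs, Prod.ext_iff, ite_and, sum_ite_irrel]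
  ring

end

/-- Under the local step-size choices
`τ_i ≤ 1/(max_j Σ_k |[A_iᵀ]_{jk}| + δ)`, `ν_i ≤ 1/(2d_i + δ)` and
`σ_i ≤ 1/(max_j Σ_k |[A_i]_{jk}| + 2d_i + δ)`, the matrix `Φ − δI` is positive semidefinite,
and hence `Φ` is positive definite. -/
theorem precondPhi_posDef
    (N m : ℕ) (n : Fin N → ℕ)
    (A : ∀ i : Fin N, Matrix (Fin m) (Fin (n i)) ℝ)
    (τ ν σ : Fin N → ℝ) (d : Fin N → ℝ)
    (hτpos : ∀ i, 0 < τ i) (hνpos : ∀ i, 0 < ν i) (hσpos : ∀ i, 0 < σ i)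
    (L : Matrix (Fin N) (Fin N) ℝ) (hLsymm : L.IsSymm)
    (hd : ∀ i, (∑ j, |L i j|) = 2 * d i)
    (δ : ℝ) (hδ : 0 < δ)
    (hτ : ∀ i, τ i ≤ 1 / ((⨆ j : Fin (n i), ∑ k : Fin m, |A i k j|) + δ))
    (hν : ∀ i, ν i ≤ 1 / (2 * d i + δ))
    (hσ : ∀ i, σ i ≤ 1 / ((⨆ j : Fin m, ∑ k : Fin (n i), |A i j k|) + 2 * d i + δ)) :
    (precondPhi N m n A τ ν σ L - δ •
        (1 : Matrix ((Σ i : Fin N, Fin (n i)) ⊕ ((Fin N × Fin m) ⊕ (Fin N × Fin m)))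
          ((Σ i : Fin N, Fin (n i)) ⊕ ((Fin N × Fin m) ⊕ (Fin N × Fin m))) ℝ)).PosSemidef ∧
      (precondPhi N m n A τ ν σ L).PosDef := by
  simp only [← hd] at hν hσ
  have hdom : ∀ r, ∑ c ∈ univ.erase r, |precondPhi N m n A τ ν σ L r c| + δ ≤
      precondPhi N m n A τ ν σ L r r := by
    rintro (p | ⟨i, k⟩ | ⟨i, k⟩)
    · rw [sum_abs_precondPhi_inl_offDiag, precondPhi_inl_inl_self]
      refine le_one_div_of_le_of_le_one_div (by positivity) (hτpos p.1) ?_ (hτ p.1)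
      gcongr
      exact Finite.le_ciSup_of_le p.2 le_rfl
    · rw [sum_abs_precondPhi_inr_inl_offDiag, precondPhi_inr_inl_self]
      exact le_one_div_of_le_of_le_one_div (by positivity) (hνpos i) le_rfl (hν i)
    · rw [sum_abs_precondPhi_inr_inr_offDiag, precondPhi_inr_inr_self]
      refine le_one_div_of_le_of_le_one_div (by positivity) (hσpos i) ?_ (hσ i)
      gcongr
      exact Finite.le_ciSup_of_le k le_rfl
  have hpsd := (precondPhi_isSymm A τ ν σ L hLsymm).posSemidef_sub_smul_one hdom
  exact ⟨hpsd, hpsd.posDef_of_sub_smul_one hδ⟩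

end
end

section
/- Let E be a finite-dimensional real inner product space and Φ : E → E a self-adjoint positive definite linear map. If B : E → Set E is maximally monotone with respect to the standard inner product, then the operator x ↦ Φ⁻¹ '' (B x) (the image of B x under Φ⁻¹) is maximally monotone with respect to the Φ-inner product ⟨x, y⟩_Φ = ⟨Φx, y⟩. -/
open scoped RealInnerProductSpace

/-- If `B` is maximally monotone (standard inner product) and `Φ` is a
self-adjoint positive definite linear map on a finite-dimensional real inner product space,
then `x ↦ Φ⁻¹ '' (B x)` is maximally monotone with respect to the `Φ`-inner product
`⟨x, y⟩_Φ = ⟨Φx, y⟩`.  The inverse is represented by any two-sided inverse `Ψ` of `Φ`. -/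
theorem phiInv_image_maximallyMonotone
    (E : Type*) [NormedAddCommGroup E] [InnerProductSpace ℝ E] [FiniteDimensional ℝ E]
    (Φ : E →ₗ[ℝ] E)
    (hsa : ∀ x y : E, ⟪Φ x, y⟫ = ⟪x, Φ y⟫)
    (hpd : ∀ x : E, x ≠ 0 → 0 < ⟪Φ x, x⟫)
    (B : E → Set E)
    (hmono : ∀ x y : E, ∀ u ∈ B x, ∀ v ∈ B y, 0 ≤ ⟪x - y, u - v⟫)
    (hmax : ∀ (y : E) (v : E), (∀ (x : E), ∀ u ∈ B x, 0 ≤ ⟪x - y, u - v⟫) → v ∈ B y) :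
    ∀ Ψ : E → E, Function.LeftInverse Ψ Φ → Function.RightInverse Ψ Φ →
      ((∀ x y : E, ∀ u ∈ Ψ '' B x, ∀ v ∈ Ψ '' B y, 0 ≤ ⟪Φ (x - y), u - v⟫) ∧
        (∀ (y : E) (v : E),
          (∀ (x : E), ∀ u ∈ Ψ '' B x, 0 ≤ ⟪Φ (x - y), u - v⟫) → v ∈ Ψ '' B y)) := by
  intro Ψ hL hR
  constructor
  · rintro x y u ⟨u', hu', rfl⟩ v ⟨v', hv', rfl⟩
    have : ⟪Φ (x - y), Ψ u' - Ψ v'⟫ = ⟪x - y, u' - v'⟫ := by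
      rw [hsa, map_sub, hR, hR]
    rw [this]
    exact hmono x y u' hu' v' hv'
  · intro y v hv
    refine ⟨Φ v, ?_, hL v⟩
    apply hmax
    intro x u hu
    have h := hv x (Ψ u) ⟨u, hu, rfl⟩
    rwa [hsa, map_sub, hR] at h
end

section
/- Let E be a real inner product space, ξ ∈ (0, 1), and let T₁, T₂ : E → E satisfy, for all x, y ∈ E: ‖T₁x − T₁y‖² ≤ ‖x − y‖² − ((1 − ξ)/ξ)‖(x − y) − (T₁x − T₁y)‖² (T₁ is ξ-averaged) and ‖T₂x − T₂y‖² ≤ ‖x − y‖² − ‖(x − y) − (T₂x − T₂y)‖² (T₂ is 1/2-averaged). Then for all x, y ∈ E: ‖T₂T₁x − T₂T₁y‖² ≤ ‖x − y‖² − (1 − ξ)‖(x − y) − (T₂T₁x − T₂T₁y)‖². -/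
open scoped RealInnerProductSpace

/-- The composition of a `1/2`-averaged operator `T₂` with a `ξ`-averaged
operator `T₁` satisfies
`‖T₂T₁x − T₂T₁y‖² ≤ ‖x − y‖² − (1 − ξ)‖(x − y) − (T₂T₁x − T₂T₁y)‖²`. -/
theorem composition_of_averaged
    (E : Type*) [NormedAddCommGroup E] [InnerProductSpace ℝ E]
    (ξ : ℝ) (hξ0 : 0 < ξ) (hξ1 : ξ < 1)
    (T₁ T₂ : E → E)
    (hT₁ : ∀ x y : E, ‖T₁ x - T₁ y‖ ^ 2 ≤
      ‖x - y‖ ^ 2 - ((1 - ξ) / ξ) * ‖(x - y) - (T₁ x - T₁ y)‖ ^ 2)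
    (hT₂ : ∀ x y : E, ‖T₂ x - T₂ y‖ ^ 2 ≤
      ‖x - y‖ ^ 2 - ‖(x - y) - (T₂ x - T₂ y)‖ ^ 2) :
    ∀ x y : E, ‖T₂ (T₁ x) - T₂ (T₁ y)‖ ^ 2 ≤
      ‖x - y‖ ^ 2 - (1 - ξ) * ‖(x - y) - (T₂ (T₁ x) - T₂ (T₁ y))‖ ^ 2 := by
  intro x y
  have h1 := hT₁ x y
  have h2 := hT₂ (T₁ x) (T₁ y)
  set a := x - y with ha
  set b := T₁ x - T₁ y with hb
  set c := T₂ (T₁ x) - T₂ (T₁ y) with hc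
  have key : (1 - ξ) * ‖a - c‖ ^ 2 ≤ ((1 - ξ) / ξ) * ‖a - b‖ ^ 2 + ‖b - c‖ ^ 2 := by
    have habc : a - c = (a - b) + (b - c) := by abel
    rw [habc]
    set u := a - b
    set v := b - c
    have h0 : (0 : ℝ) ≤ ‖(1 - ξ) • u - ξ • v‖ ^ 2 := sq_nonneg _
    have e1 : ‖(1 - ξ) • u - ξ • v‖ ^ 2 =
        (1 - ξ) ^ 2 * ‖u‖ ^ 2 - 2 * ((1 - ξ) * ξ) * ⟪u, v⟫ + ξ ^ 2 * ‖v‖ ^ 2 := by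
      rw [norm_sub_sq_real, real_inner_smul_left, real_inner_smul_right, norm_smul, norm_smul,
        Real.norm_eq_abs, Real.norm_eq_abs, abs_of_pos hξ0, abs_of_pos (by linarith : (0:ℝ) < 1 - ξ)]
      ring
    have e2 : ‖u + v‖ ^ 2 = ‖u‖ ^ 2 + 2 * ⟪u, v⟫ + ‖v‖ ^ 2 := by
      rw [norm_add_sq_real]
    rw [e1] at h0
    rw [e2]
    have hk : (1 - ξ) / ξ * ‖u‖ ^ 2 * ξ = (1 - ξ) * ‖u‖ ^ 2 := by
      field_simp
    nlinarith [h0, hk, hξ0, sq_nonneg ‖u‖, sq_nonneg ‖v‖]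
  linarith
end

section
/- Let E be a finite-dimensional real inner product space, β, δ > 0 with 2βδ > 1, Φ : E → E a self-adjoint linear map with ⟨Φx, x⟩ ≥ δ‖x‖² for all x, Ā : E → E a β-cocoercive map, and B̄ : E → Set E a maximally monotone operator such that zer(Ā + B̄) = {ϖ : −Ā(ϖ) ∈ B̄(ϖ)} is nonempty. If the sequence (ϖ_k) in E satisfies the forward–backward inclusion −Ā(ϖ_k) − Φ(ϖ_{k+1} − ϖ_k) ∈ B̄(ϖ_{k+1}) for all k, then (ϖ_k) converges to some point ϖ* ∈ zer(Ā + B̄). -/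
open scoped RealInnerProductSpace

/-- Convergence of the (preconditioned) forward–backward algorithm: with `Φ`
self-adjoint and `δ`-coercive, `Ā` `β`-cocoercive with `2βδ > 1`, and `B̄` maximally monotone
with a nonempty zero set of `Ā + B̄`, any sequence satisfying
`−Ā(ϖ_k) − Φ(ϖ_{k+1} − ϖ_k) ∈ B̄(ϖ_{k+1})` converges to a zero of `Ā + B̄`. -/
theorem forward_backward_convergence
    (E : Type*) [NormedAddCommGroup E] [InnerProductSpace ℝ E] [FiniteDimensional ℝ E]
    (β δ : ℝ) (hβ : 0 < β) (hδ : 0 < δ) (hβδ : 1 < 2 * β * δ)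
    (Φ : E →ₗ[ℝ] E)
    (hsa : ∀ x y : E, ⟪Φ x, y⟫ = ⟪x, Φ y⟫)
    (hcoer : ∀ x : E, δ * ‖x‖ ^ 2 ≤ ⟪Φ x, x⟫)
    (A : E → E)
    (hco : ∀ x y : E, β * ‖A x - A y‖ ^ 2 ≤ ⟪x - y, A x - A y⟫)
    (B : E → Set E)
    (hmono : ∀ x y : E, ∀ u ∈ B x, ∀ v ∈ B y, 0 ≤ ⟪x - y, u - v⟫)
    (hmax : ∀ (y : E) (v : E), (∀ (x : E), ∀ u ∈ B x, 0 ≤ ⟪x - y, u - v⟫) → v ∈ B y)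
    (hzer : ∃ ϖ : E, -A ϖ ∈ B ϖ)
    (ϖ : ℕ → E)
    (hseq : ∀ k : ℕ, -A (ϖ k) - Φ (ϖ (k + 1) - ϖ k) ∈ B (ϖ (k + 1))) :
    ∃ ϖstar : E, -A ϖstar ∈ B ϖstar ∧
      Filter.Tendsto ϖ Filter.atTop (nhds ϖstar) := by
  classical
  obtain ⟨z, hz⟩ := hzer
  have hβ2 : (0:ℝ) < 2 * β := by linarith
  set c : ℝ := δ - 1 / (2 * β) with hc_def
  have hc : 0 < c := by
    rw [hc_def, sub_pos, div_lt_iff₀ hβ2]; linarith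
  have hQnonneg : ∀ x : E, (0:ℝ) ≤ ⟪Φ x, x⟫ := fun x =>
    le_trans (by positivity) (hcoer x)
  -- the key one-step inequality
  have key : ∀ w : E, -A w ∈ B w → ∀ k : ℕ,
      ⟪Φ (ϖ (k+1) - w), ϖ (k+1) - w⟫ + c * ‖ϖ (k+1) - ϖ k‖ ^ 2
        ≤ ⟪Φ (ϖ k - w), ϖ k - w⟫ := by
    intro w hw k
    set p := ϖ (k+1) - w with hp
    set d := ϖ (k+1) - ϖ k with hd
    set a := A (ϖ k) - A w with ha
    have hpd : p - d = ϖ k - w := by rw [hp, hd]; abel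
    have h1 : (0:ℝ) ≤ ⟪p, (-A (ϖ k) - Φ d) - (-A w)⟫ :=
      hmono _ _ _ (hseq k) _ hw
    have h1' : ⟪Φ p, d⟫ ≤ -⟪p, a⟫ := by
      have hrw : (-A (ϖ k) - Φ d) - (-A w) = -a - Φ d := by rw [ha]; abel
      rw [hrw, inner_sub_right, inner_neg_right] at h1
      have hs : ⟪Φ p, d⟫ = ⟪p, Φ d⟫ := hsa p d
      linarith [hs]
    have h2 : β * ‖a‖ ^ 2 ≤ ⟪p - d, a⟫ := by
      rw [hpd]; exact hco (ϖ k) w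
    have hsplit : ⟪p, a⟫ = ⟪p - d, a⟫ + ⟪d, a⟫ := by
      rw [inner_sub_left p d a]; ring
    have hcs : -⟪d, a⟫ ≤ ‖d‖ * ‖a‖ := by
      have h := abs_real_inner_le_norm d a
      have h2 := neg_abs_le (⟪d, a⟫ : ℝ)
      linarith
    have hyoung : 2 * (‖d‖ * ‖a‖) ≤ 1 / (2 * β) * ‖d‖ ^ 2 + 2 * β * ‖a‖ ^ 2 := by
      rw [← sub_nonneg]
      have hid : 1 / (2 * β) * ‖d‖ ^ 2 + 2 * β * ‖a‖ ^ 2 - 2 * (‖d‖ * ‖a‖)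
          = (‖d‖ - 2 * β * ‖a‖) ^ 2 / (2 * β) := by
        field_simp; ring
      rw [hid]; positivity
    have hexpand0 : ∀ u v : E, (⟪Φ (u - v), u - v⟫ : ℝ)
        = ⟪Φ u, u⟫ - 2 * ⟪Φ u, v⟫ + ⟪Φ v, v⟫ := by
      intro u v
      rw [map_sub, inner_sub_left (Φ u) (Φ v) (u - v), inner_sub_right (Φ u) u v,
        inner_sub_right (Φ v) u v, hsa v u, real_inner_comm v (Φ u)]
      ring
    have hexpand := hexpand0 p d
    have hQd : δ * ‖d‖ ^ 2 ≤ ⟪Φ d, d⟫ := hcoer d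
    have hcexp : c * ‖d‖ ^ 2 = δ * ‖d‖ ^ 2 - 1 / (2 * β) * ‖d‖ ^ 2 := by
      rw [hc_def]; ring
    rw [← hpd]
    clear_value c p d a
    linarith
  -- monotonicity of the Lyapunov quantity
  have hanti : ∀ w : E, -A w ∈ B w →
      Antitone (fun k => (⟪Φ (ϖ k - w), ϖ k - w⟫ : ℝ)) := by
    intro w hw
    apply antitone_nat_of_succ_le
    intro k
    have h := key w hw k
    have h2 : 0 ≤ c * ‖ϖ (k+1) - ϖ k‖ ^ 2 := by positivity
    linarith
  have hbdd : ∀ w : E, BddBelow (Set.range fun k => (⟪Φ (ϖ k - w), ϖ k - w⟫ : ℝ)) := by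
    intro w
    exact ⟨0, by rintro x ⟨k, rfl⟩; exact hQnonneg _⟩
  set g : ℕ → ℝ := fun k => ⟪Φ (ϖ k - z), ϖ k - z⟫ with hg_def
  have hgL : Filter.Tendsto g Filter.atTop (nhds (⨅ k, g k)) :=
    tendsto_atTop_ciInf (hanti z hz) (hbdd z)
  -- successive differences tend to zero
  have hdiff0 : Filter.Tendsto (fun k => g k - g (k+1)) Filter.atTop (nhds 0) := by
    have h2 : Filter.Tendsto (fun k => g (k+1)) Filter.atTop (nhds (⨅ k, g k)) :=
      hgL.comp (Filter.tendsto_add_atTop_nat 1)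
    simpa using hgL.sub h2
  have hsq0 : Filter.Tendsto (fun k => ‖ϖ (k+1) - ϖ k‖ ^ 2) Filter.atTop (nhds 0) := by
    have hsqz : Filter.Tendsto (fun k => c * ‖ϖ (k+1) - ϖ k‖ ^ 2) Filter.atTop (nhds 0) := by
      apply squeeze_zero (fun k => by positivity) (fun k => ?_) hdiff0
      have := key z hz k
      simp only [hg_def]
      linarith
    have := hsqz.const_mul c⁻¹
    simpa [mul_assoc, inv_mul_cancel_left₀ hc.ne'] using this
  have hd0 : Filter.Tendsto (fun k => ϖ (k+1) - ϖ k) Filter.atTop (nhds 0) := by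
    rw [tendsto_zero_iff_norm_tendsto_zero]
    have := (Real.continuous_sqrt.tendsto 0).comp hsq0
    simpa [Function.comp_def, Real.sqrt_sq (norm_nonneg _)] using this
  -- boundedness: a convergent subsequence exists
  have hball : ∀ k, ϖ k ∈ Metric.closedBall z (Real.sqrt (g 0 / δ)) := by
    intro k
    have h1 : g k ≤ g 0 := hanti z hz (Nat.zero_le k)
    have h2 : δ * ‖ϖ k - z‖ ^ 2 ≤ g k := hcoer _
    rw [Metric.mem_closedBall, dist_eq_norm]
    rw [show Real.sqrt (g 0 / δ) = Real.sqrt (g 0 / δ) from rfl]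
    have h3 : ‖ϖ k - z‖ ^ 2 ≤ g 0 / δ := by
      rw [le_div_iff₀ hδ]; nlinarith
    calc ‖ϖ k - z‖ = Real.sqrt (‖ϖ k - z‖ ^ 2) := (Real.sqrt_sq (norm_nonneg _)).symm
      _ ≤ Real.sqrt (g 0 / δ) := Real.sqrt_le_sqrt h3
  obtain ⟨xstar, -, φ, hφmono, hφtend⟩ :=
    tendsto_subseq_of_bounded Metric.isBounded_closedBall hball
  have hφatTop : Filter.Tendsto φ Filter.atTop Filter.atTop := hφmono.tendsto_atTop
  -- the shifted subsequence also converges to xstar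
  have hφ1 : Filter.Tendsto (fun j => ϖ (φ j + 1)) Filter.atTop (nhds xstar) := by
    have h := hφtend.add (hd0.comp hφatTop)
    simpa [Function.comp_def] using h
  -- A is Lipschitz, hence continuous along the subsequence
  have hAlip : ∀ x y : E, ‖A x - A y‖ ≤ β⁻¹ * ‖x - y‖ := by
    intro x y
    rcases eq_or_lt_of_le (norm_nonneg (A x - A y)) with h0 | h0
    · rw [← h0]; positivity
    · have h1 := hco x y
      have h2 := real_inner_le_norm (x - y) (A x - A y)
      have h3 : β * ‖A x - A y‖ ≤ ‖x - y‖ := by nlinarith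
      calc ‖A x - A y‖ = β⁻¹ * (β * ‖A x - A y‖) := by field_simp
        _ ≤ β⁻¹ * ‖x - y‖ := mul_le_mul_of_nonneg_left h3 (inv_nonneg.mpr hβ.le)
  have hAtend : Filter.Tendsto (fun j => A (ϖ (φ j))) Filter.atTop (nhds (A xstar)) := by
    rw [tendsto_iff_norm_sub_tendsto_zero]
    apply squeeze_zero (fun j => norm_nonneg _) (fun j => hAlip _ _)
    have h := (tendsto_iff_norm_sub_tendsto_zero.mp hφtend).const_mul β⁻¹
    simpa [Function.comp_def] using h
  have hΦcont : Continuous Φ := Φ.continuous_of_finiteDimensional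
  have hΦtend : Filter.Tendsto (fun j => Φ (ϖ (φ j + 1) - ϖ (φ j)))
      Filter.atTop (nhds 0) := by
    have h := (hΦcont.tendsto 0).comp (hd0.comp hφatTop)
    simpa [Function.comp_def] using h
  -- xstar is a zero of A + B, via maximal monotonicity
  have hustar : -A xstar ∈ B xstar := by
    apply hmax
    intro x u hu
    have hterm : ∀ j, (0:ℝ) ≤
        ⟪x - ϖ (φ j + 1), u - (-A (ϖ (φ j)) - Φ (ϖ (φ j + 1) - ϖ (φ j)))⟫ :=
      fun j => hmono x (ϖ (φ j + 1)) u hu _ (hseq (φ j))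
    have hlim : Filter.Tendsto
        (fun j => (⟪x - ϖ (φ j + 1), u - (-A (ϖ (φ j)) - Φ (ϖ (φ j + 1) - ϖ (φ j)))⟫ : ℝ))
        Filter.atTop (nhds (⟪x - xstar, u - (-A xstar)⟫ : ℝ)) := by
      have harg2 : Filter.Tendsto
          (fun j => u - (-A (ϖ (φ j)) - Φ (ϖ (φ j + 1) - ϖ (φ j))))
          Filter.atTop (nhds (u - (-A xstar - 0))) :=
        Filter.Tendsto.sub tendsto_const_nhds (Filter.Tendsto.sub hAtend.neg hΦtend)
      have harg1 : Filter.Tendsto (fun j => x - ϖ (φ j + 1)) Filter.atTop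
          (nhds (x - xstar)) := Filter.Tendsto.sub tendsto_const_nhds hφ1
      have := Filter.Tendsto.inner (𝕜 := ℝ) harg1 harg2
      simpa using this
    exact ge_of_tendsto' hlim hterm
  -- Fejér-type convergence to xstar
  refine ⟨xstar, hustar, ?_⟩
  set h : ℕ → ℝ := fun k => ⟪Φ (ϖ k - xstar), ϖ k - xstar⟫ with hh_def
  have hhL : Filter.Tendsto h Filter.atTop (nhds (⨅ k, h k)) :=
    tendsto_atTop_ciInf (hanti xstar hustar) (hbdd xstar)
  have hsub0 : Filter.Tendsto (fun j => h (φ j)) Filter.atTop (nhds 0) := by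
    have hc2 : Continuous fun x : E => (⟪Φ (x - xstar), x - xstar⟫ : ℝ) :=
      Continuous.inner (hΦcont.comp (continuous_id.sub continuous_const))
        (continuous_id.sub continuous_const)
    have := (hc2.tendsto xstar).comp hφtend
    simp only [Function.comp_def, sub_self, map_zero, inner_zero_left] at this
    exact this
  have hsub' : Filter.Tendsto (fun j => h (φ j)) Filter.atTop (nhds (⨅ k, h k)) :=
    hhL.comp hφatTop
  have hL0 : (⨅ k, h k) = 0 := tendsto_nhds_unique hsub' hsub0
  have hh0 : Filter.Tendsto h Filter.atTop (nhds 0) := hL0 ▸ hhL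
  have hnsq : Filter.Tendsto (fun k => ‖ϖ k - xstar‖ ^ 2) Filter.atTop (nhds 0) := by
    apply squeeze_zero (f := fun k => ‖ϖ k - xstar‖ ^ 2) (g := fun k => δ⁻¹ * h k)
      (fun k => sq_nonneg _) (fun k => ?_)
      (by have := hh0.const_mul δ⁻¹; rwa [mul_zero] at this)
    have h1 : δ * ‖ϖ k - xstar‖ ^ 2 ≤ h k := hcoer (ϖ k - xstar)
    have h2 : δ⁻¹ * (δ * ‖ϖ k - xstar‖ ^ 2) ≤ δ⁻¹ * h k :=
      mul_le_mul_of_nonneg_left h1 (inv_nonneg.mpr hδ.le)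
    rw [inv_mul_cancel_left₀ hδ.ne'] at h2
    exact h2
  rw [tendsto_iff_norm_sub_tendsto_zero]
  have := (Real.continuous_sqrt.tendsto 0).comp hnsq
  simpa [Function.comp_def, Real.sqrt_sq (norm_nonneg _)] using this
end

section
/- Let E be a finite-dimensional real inner product space, β, δ > 0, α ∈ (0, 1), ε ∈ (0, 1) with 2βδ(1 − 3α − ε) ≥ (1 − α)² and 2βδ > 1. Let Φ : E → E be a self-adjoint linear map with ⟨Φx, x⟩ ≥ δ‖x‖² for all x, Ā : E → E a β-cocoercive map, and B̄ : E → Set E a maximally monotone operator such that zer(Ā + B̄) = {ϖ : −Ā(ϖ) ∈ B̄(ϖ)} is nonempty. If the sequences (ϖ_k), (ϖ̃_k) in E satisfy the inertial forward–backward scheme ϖ̃_k = ϖ_k + α(ϖ_k − ϖ_{k−1}) and Φ(ϖ̃_k − ϖ_{k+1}) − Ā(ϖ̃_k) ∈ B̄(ϖ_{k+1}) for all k ≥ 1, then (ϖ_k) converges to some point ϖ* ∈ zer(Ā + B̄). -/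
open Filter
open scoped RealInnerProductSpace

lemma aux_contract {a : ℝ} (ha0 : 0 ≤ a) (ha1 : a < 1) (φ b : ℕ → ℝ) (L : ℝ)
    (hb : Tendsto b atTop (nhds L)) (hrec : ∀ n, φ (n + 1) = a * φ n + b n) :
    Tendsto φ atTop (nhds (L / (1 - a))) := by
  have h1a : 0 < 1 - a := by linarith
  set e : ℕ → ℝ := fun n => φ n - L / (1 - a) with he
  have herec : ∀ n, e (n + 1) = a * e n + (b n - L) := by
    intro n
    simp only [he, hrec n]
    field_simp
    ring
  have he0 : Tendsto e atTop (nhds 0) := by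
    rw [Metric.tendsto_atTop]
    intro η hη
    obtain ⟨N₁, hN₁⟩ := (Metric.tendsto_atTop.mp hb) ((1 - a) * η / 2) (by positivity)
    have hind : ∀ m, |e (N₁ + m)| ≤ a ^ m * |e N₁| + η / 2 := by
      intro m
      induction m with
      | zero => simp; linarith
      | succ m ih =>
        have hr : |b (N₁ + m) - L| ≤ (1 - a) * η / 2 := by
          have := hN₁ (N₁ + m) (Nat.le_add_right _ _)
          rw [Real.dist_eq] at this
          linarith
        have heq : e (N₁ + (m + 1)) = a * e (N₁ + m) + (b (N₁ + m) - L) := by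
          rw [← herec (N₁ + m)]; ring_nf
        calc |e (N₁ + (m + 1))| = |a * e (N₁ + m) + (b (N₁ + m) - L)| := by rw [heq]
          _ ≤ |a * e (N₁ + m)| + |b (N₁ + m) - L| := abs_add_le _ _
          _ ≤ a * |e (N₁ + m)| + (1 - a) * η / 2 := by
              rw [abs_mul, abs_of_nonneg ha0]; linarith
          _ ≤ a * (a ^ m * |e N₁| + η / 2) + (1 - a) * η / 2 := by
              nlinarith [abs_nonneg (e (N₁ + m))]
          _ = a ^ (m + 1) * |e N₁| + (a * η / 2 + (1 - a) * η / 2) := by ring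
          _ ≤ a ^ (m + 1) * |e N₁| + η / 2 := by linarith
    have hpow : Tendsto (fun m => a ^ m * |e N₁|) atTop (nhds 0) := by
      simpa using (tendsto_pow_atTop_nhds_zero_of_lt_one ha0 ha1).mul_const |e N₁|
    obtain ⟨M, hM⟩ := (Metric.tendsto_atTop.mp hpow) (η / 2) (by positivity)
    refine ⟨N₁ + M, fun n hn => ?_⟩
    have hm : ∃ m, n = N₁ + m ∧ M ≤ m := ⟨n - N₁, by omega, by omega⟩
    obtain ⟨m, rfl, hMm⟩ := hm
    have h2 := hM m hMm
    rw [Real.dist_eq, sub_zero] at h2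
    rw [abs_of_nonneg (by positivity : (0:ℝ) ≤ a ^ m * |e N₁|)] at h2
    rw [Real.dist_eq, sub_zero]
    calc |e (N₁ + m)| ≤ a ^ m * |e N₁| + η / 2 := hind m
      _ < η / 2 + η / 2 := by linarith
      _ = η := by ring
  have hfin : Tendsto (fun n => e n + L / (1 - a)) atTop (nhds (0 + L / (1 - a))) :=
    he0.add tendsto_const_nhds
  rw [zero_add] at hfin
  refine hfin.congr fun n => ?_
  simp [he]

set_option maxHeartbeats 1000000 in
lemma aux_key
    (E : Type*) [NormedAddCommGroup E] [InnerProductSpace ℝ E]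
    (β δ α ε : ℝ) (hβ : 0 < β) (hδ : 0 < δ)
    (hα0 : 0 < α) (hα1 : α < 1) (hε0 : 0 < ε)
    (hstep : (1 - α) ^ 2 ≤ 2 * β * δ * (1 - 3 * α - ε)) (hβδ : 1 < 2 * β * δ)
    (Φ : E →ₗ[ℝ] E)
    (hsa : ∀ x y : E, ⟪Φ x, y⟫ = ⟪x, Φ y⟫)
    (hcoer : ∀ x : E, δ * ‖x‖ ^ 2 ≤ ⟪Φ x, x⟫)
    (A : E → E)
    (hco : ∀ x y : E, β * ‖A x - A y‖ ^ 2 ≤ ⟪x - y, A x - A y⟫)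
    (B : E → Set E)
    (hmono : ∀ x y : E, ∀ u ∈ B x, ∀ v ∈ B y, 0 ≤ ⟪x - y, u - v⟫)
    (ϖ ϖt : ℕ → E)
    (hinertia : ∀ k : ℕ, 1 ≤ k → ϖt k = ϖ k + α • (ϖ k - ϖ (k - 1)))
    (hseq : ∀ k : ℕ, 1 ≤ k → Φ (ϖt k - ϖ (k + 1)) - A (ϖt k) ∈ B (ϖ (k + 1)))
    (Q : E → ℝ) (hQdef : ∀ x, Q x = ⟪Φ x, x⟫)
    (xstar : E) (hxstar : -A xstar ∈ B xstar) :
    Filter.Tendsto (fun n => Q (ϖ (n + 1) - ϖ n)) Filter.atTop (nhds 0) ∧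
    ∃ L, Filter.Tendsto (fun n => Q (ϖ n - xstar)) Filter.atTop (nhds L) := by
  -- basic facts about the symmetric bilinear form
  have hB : ∀ x y : E, ⟪Φ x, y⟫ = ⟪Φ y, x⟫ := fun x y => by
    rw [hsa, real_inner_comm]
  have hQadd_smul : ∀ (t : ℝ) (x y : E),
      Q (x + t • y) = Q x + t ^ 2 * Q y + 2 * t * ⟪Φ x, y⟫ := by
    intro t x y
    simp only [hQdef, map_add, map_smul, inner_add_left, inner_add_right,
      inner_smul_left, inner_smul_right, RCLike.ofReal_real_eq_id, id_eq,
      smul_eq_mul, conj_trivial]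
    linear_combination t * (hB y x)
  have hQsub : ∀ x y : E, Q (x - y) = Q x + Q y - 2 * ⟪Φ x, y⟫ := by
    intro x y
    have := hQadd_smul (-1) x y
    simp only [neg_one_smul, neg_one_sq, one_mul] at this
    rw [sub_eq_add_neg]
    rw [this]; ring
  have hQnonneg : ∀ x : E, 0 ≤ Q x := fun x => by
    rw [hQdef]; exact le_trans (by positivity) (hcoer x)
  have hQnorm : ∀ x : E, δ * ‖x‖ ^ 2 ≤ Q x := fun x => by rw [hQdef]; exact hcoer x
  have hCS : ∀ x y : E, 2 * ⟪Φ x, y⟫ ≤ Q x + Q y := by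
    intro x y
    have := hQnonneg (x - y)
    rw [hQsub] at this
    linarith
  have hQneg : ∀ x : E, Q (-x) = Q x := fun x => by
    simp [hQdef, map_neg, inner_neg_neg]
  -- constants
  obtain ⟨θ, hθdef⟩ : ∃ θ : ℝ, θ = 1 - 1 / (2 * β * δ) := ⟨_, rfl⟩
  have hT : (0:ℝ) < 2 * β * δ := by positivity
  have hθ0 : 0 < θ := by
    rw [hθdef]
    have : 1 / (2 * β * δ) < 1 := by rw [div_lt_one hT]; linarith
    linarith
  have hθ1 : θ ≤ 1 := by
    rw [hθdef]
    have : 0 < 1 / (2 * β * δ) := by positivity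
    linarith
  obtain ⟨c, hcdef⟩ : ∃ c : ℝ, c = α * (1 + α) + θ * α * (1 - α) := ⟨_, rfl⟩
  have hc0 : 0 ≤ c := by
    have h1 : 0 < θ * α * (1 - α) := by
      apply mul_pos (mul_pos hθ0 hα0); linarith
    nlinarith
  have hθc : c + ε ≤ θ * (1 - α) := by
    have hdiv : (1 - α) ^ 2 / (2 * β * δ) ≤ 1 - 3 * α - ε := by
      rw [div_le_iff₀ hT]; linarith [hstep]
    have hkey : α * (1 + α) + ε ≤ θ * (1 - α) ^ 2 := by
      have : θ * (1 - α) ^ 2 = (1 - α) ^ 2 - (1 - α) ^ 2 / (2 * β * δ) := by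
        rw [hθdef]; field_simp
      rw [this]
      nlinarith
    nlinarith
  -- sequences
  set φ : ℕ → ℝ := fun n => Q (ϖ n - xstar) with hφdef
  set d : ℕ → ℝ := fun n => Q (ϖ (n + 1) - ϖ n) with hddef
  set Γ : ℕ → ℝ := fun n => φ (n + 1) - α * φ n + c * d n with hΓdef
  have key : ∀ n : ℕ, Γ (n + 1) + ε * d (n + 1) ≤ Γ n := by
    intro n
    set p := ϖ (n + 2) with hp
    set q := ϖ (n + 1) with hq
    set r := ϖ n with hr
    set w := ϖt (n + 1) with hwdef
    have hw : w = q + α • (q - r) := by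
      have := hinertia (n + 1) (by omega)
      simpa using this
    have hu : Φ (w - p) - A w ∈ B p := by
      have := hseq (n + 1) (by omega)
      exact this
    -- Step A: monotonicity
    have hA : 0 ≤ ⟪p - xstar, (Φ (w - p) - A w) - (-A xstar)⟫ :=
      hmono p xstar _ hu _ hxstar
    have hA' : ⟪p - xstar, A w - A xstar⟫ ≤ ⟪p - xstar, Φ (w - p)⟫ := by
      have h1 : (Φ (w - p) - A w) - (-A xstar) = Φ (w - p) - (A w - A xstar) := by abel
      rw [h1, inner_sub_right] at hA
      linarith
    -- Step B: cocoercivity bound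
    have hB1 : β * ‖A w - A xstar‖ ^ 2 ≤ ⟪w - xstar, A w - A xstar⟫ := hco w xstar
    have hsplit : ⟪p - xstar, A w - A xstar⟫
        = ⟪w - xstar, A w - A xstar⟫ + ⟪p - w, A w - A xstar⟫ := by
      rw [← inner_add_left]
      congr 1
      abel
    have hcs2 : |⟪p - w, A w - A xstar⟫| ≤ ‖p - w‖ * ‖A w - A xstar‖ :=
      abs_real_inner_le_norm _ _
    have hBfinal : -(‖p - w‖ ^ 2 / (4 * β)) ≤ ⟪p - xstar, A w - A xstar⟫ := by
      rw [hsplit]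
      have h3 : -(‖p - w‖ * ‖A w - A xstar‖) ≤ ⟪p - w, A w - A xstar⟫ :=
        neg_le_of_abs_le hcs2
      have hsq : (0:ℝ) ≤ (2 * β * ‖A w - A xstar‖ - ‖p - w‖) ^ 2 / (4 * β) := by
        positivity
      have heqq : (2 * β * ‖A w - A xstar‖ - ‖p - w‖) ^ 2 / (4 * β)
          = β * ‖A w - A xstar‖ ^ 2 + ‖p - w‖ ^ 2 / (4 * β)
            - ‖p - w‖ * ‖A w - A xstar‖ := by
        field_simp
        ring
      linarith [hB1, h3, hsq, heqq]
    -- Step C: identity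
    have hC : 2 * ⟪p - xstar, Φ (w - p)⟫ = Q (w - xstar) - Q (p - xstar) - Q (w - p) := by
      have h4 : (p - xstar) + (1:ℝ) • (w - p) = w - xstar := by
        rw [one_smul]; abel
      have h5 := hQadd_smul 1 (p - xstar) (w - p)
      rw [h4] at h5
      have h6 : ⟪p - xstar, Φ (w - p)⟫ = ⟪Φ (p - xstar), w - p⟫ := by
        rw [real_inner_comm, hB (w - p) (p - xstar)]
      rw [h6]
      simp only [one_pow, one_mul, mul_one] at h5
      linarith
    -- (I)
    have hI : Q (p - xstar) ≤ Q (w - xstar) - θ * Q (w - p) := by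
      have h7 : δ * ‖w - p‖ ^ 2 ≤ Q (w - p) := hQnorm _
      have h8 : ‖p - w‖ = ‖w - p‖ := norm_sub_rev _ _
      have h9 : ‖w - p‖ ^ 2 / (2 * β) ≤ Q (w - p) / (2 * β * δ) := by
        rw [div_le_div_iff₀ (by positivity) hT]
        nlinarith
      have hdiv2 : ‖p - w‖ ^ 2 / (2 * β) = 2 * (‖p - w‖ ^ 2 / (4 * β)) := by
        field_simp
        ring
      have h10 : Q (p - xstar) ≤ Q (w - xstar) - Q (w - p) + ‖p - w‖ ^ 2 / (2 * β) := by
        linarith [hA', hBfinal, hC, hdiv2]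
      have h11 : θ * Q (w - p) = Q (w - p) - Q (w - p) / (2 * β * δ) := by
        rw [hθdef]; field_simp
      rw [h8] at h10
      linarith
    -- (D)
    have hD : Q (w - xstar) = (1 + α) * φ (n + 1) - α * φ n + (α + α ^ 2) * d n := by
      have hab : w - xstar = (q - xstar) + α • ((q - xstar) - (r - xstar)) := by
        rw [hw]; module
      have e1 := hQadd_smul α (q - xstar) ((q - xstar) - (r - xstar))
      rw [← hab] at e1
      have h12 : (q - xstar) - ((q - xstar) - (r - xstar)) = r - xstar := by abel
      have e2 := hQsub (q - xstar) ((q - xstar) - (r - xstar))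
      rw [h12] at e2
      have h13 : (q - xstar) - (r - xstar) = q - r := by abel
      rw [h13] at e1 e2
      have hφ1 : φ (n + 1) = Q (q - xstar) := rfl
      have hφ0' : φ n = Q (r - xstar) := rfl
      have hd0' : d n = Q (q - r) := rfl
      rw [hφ1, hφ0', hd0']
      linear_combination e1 + α * e2
    -- (E)
    have hE : (1 - α) * d (n + 1) + (α ^ 2 - α) * d n ≤ Q (w - p) := by
      have hwp : w - p = (q - p) + α • (q - r) := by
        rw [hw]; module
      have e3 := hQadd_smul α (q - p) (q - r)
      rw [← hwp] at e3
      have h14 : Q (q - p) = Q (p - q) := by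
        rw [← hQneg (p - q)]; congr 1; abel
      have h15 : ⟪Φ (q - p), q - r⟫ = - ⟪Φ (p - q), q - r⟫ := by
        have : q - p = -(p - q) := by abel
        rw [this, map_neg, inner_neg_left]
      have h16 : 2 * ⟪Φ (p - q), q - r⟫ ≤ Q (p - q) + Q (q - r) := hCS _ _
      have hd1 : d (n + 1) = Q (p - q) := rfl
      have hd0' : d n = Q (q - r) := rfl
      rw [hd1, hd0']
      nlinarith [e3, h14, h15, h16]
    -- assemble
    have hΓn1 : Γ (n + 1) = φ (n + 2) - α * φ (n + 1) + c * d (n + 1) := rfl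
    have hΓn : Γ n = φ (n + 1) - α * φ n + c * d n := rfl
    rw [hΓn1, hΓn]
    have hd1nn : 0 ≤ d (n + 1) := hQnonneg _
    have hdnn : 0 ≤ d n := hQnonneg _
    have hmul1 : θ * ((1 - α) * d (n + 1) + (α ^ 2 - α) * d n) ≤ θ * Q (w - p) :=
      mul_le_mul_of_nonneg_left hE (le_of_lt hθ0)
    have hmul2 : (c + ε) * d (n + 1) ≤ (θ * (1 - α)) * d (n + 1) :=
      mul_le_mul_of_nonneg_right hθc hd1nn
    have hφ2le : φ (n + 2) = Q (p - xstar) := rfl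
    have h20 : φ (n + 2) ≤ (1 + α) * φ (n + 1) - α * φ n + (α + α ^ 2) * d n
        - θ * ((1 - α) * d (n + 1) + (α ^ 2 - α) * d n) := by
      rw [hφ2le]
      linarith [hI, hD, hmul1]
    have h22 : c * d n = (α + α ^ 2) * d n + θ * α * (1 - α) * d n := by
      rw [hcdef]; ring
    linarith [h20, h22, hmul2]
  have hd0 : ∀ n, 0 ≤ d n := fun n => hQnonneg _
  have hφ0 : ∀ n, 0 ≤ φ n := fun n => hQnonneg _
  have hΓmono : ∀ n, Γ (n + 1) ≤ Γ n := by
    intro n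
    have := key n
    nlinarith [hd0 (n + 1), hε0]
  have hΓle : ∀ n, Γ n ≤ Γ 0 := by
    intro n
    induction n with
    | zero => exact le_refl _
    | succ n ih => exact le_trans (hΓmono n) ih
  obtain ⟨M, hM1, hM2, hM0⟩ : ∃ M : ℝ, φ 0 ≤ M ∧ max (Γ 0) 0 ≤ (1 - α) * M ∧ 0 ≤ M := by
    refine ⟨max (φ 0) (max (Γ 0) 0 / (1 - α)), le_max_left _ _, ?_, ?_⟩
    · rw [mul_comm, ← div_le_iff₀ (by linarith : (0:ℝ) < 1 - α)]
      exact le_max_right _ _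
    · exact le_trans (hφ0 0) (le_max_left _ _)
  have hφM : ∀ n, φ n ≤ M := by
    intro n
    induction n with
    | zero => exact hM1
    | succ n ih =>
      have h1 : Γ n ≤ Γ 0 := hΓle n
      have h2 : φ (n + 1) - α * φ n + c * d n = Γ n := rfl
      have h3 : 0 ≤ c * d n := mul_nonneg hc0 (hd0 n)
      have h4 : Γ 0 ≤ max (Γ 0) 0 := le_max_left _ _
      nlinarith [mul_le_mul_of_nonneg_left ih (le_of_lt hα0)]
  have hΓbdd : ∀ n, -(α * M) ≤ Γ n := by
    intro n
    have h2 : φ (n + 1) - α * φ n + c * d n = Γ n := rfl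
    have h3 : 0 ≤ c * d n := mul_nonneg hc0 (hd0 n)
    nlinarith [hφ0 (n + 1), mul_le_mul_of_nonneg_left (hφM n) (le_of_lt hα0)]
  have hAnti : Antitone Γ := antitone_nat_of_succ_le hΓmono
  have hbdd : BddBelow (Set.range Γ) := by
    refine ⟨-(α * M), ?_⟩
    rintro x ⟨n, rfl⟩
    exact hΓbdd n
  have hΓtend : Filter.Tendsto Γ Filter.atTop (nhds (⨅ n, Γ n)) :=
    tendsto_atTop_ciInf hAnti hbdd
  set G : ℝ := ⨅ n, Γ n with hGdef
  have hΓtend1 : Filter.Tendsto (fun n => Γ (n + 1)) Filter.atTop (nhds G) :=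
    hΓtend.comp (Filter.tendsto_add_atTop_nat 1)
  have hdiff : Filter.Tendsto (fun n => Γ n - Γ (n + 1)) Filter.atTop (nhds 0) := by
    have := hΓtend.sub hΓtend1
    simpa using this
  have hd1tend : Filter.Tendsto (fun n => d (n + 1)) Filter.atTop (nhds 0) := by
    have hub : ∀ n, d (n + 1) ≤ (Γ n - Γ (n + 1)) / ε := by
      intro n
      rw [le_div_iff₀ hε0]
      have := key n
      linarith
    have hupper : Filter.Tendsto (fun n => (Γ n - Γ (n + 1)) / ε) Filter.atTop (nhds 0) := by
      have := hdiff.div_const ε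
      simpa using this
    exact tendsto_of_tendsto_of_tendsto_of_le_of_le tendsto_const_nhds hupper
      (fun n => hd0 (n + 1)) hub
  have hdtend : Filter.Tendsto d Filter.atTop (nhds 0) :=
    (Filter.tendsto_add_atTop_iff_nat 1).mp hd1tend
  refine ⟨hdtend, ⟨G / (1 - α), ?_⟩⟩
  have hbrec : ∀ n, φ (n + 1) = α * φ n + (Γ n - c * d n) := by
    intro n
    have h2 : Γ n = φ (n + 1) - α * φ n + c * d n := rfl
    linarith
  have hbtend : Filter.Tendsto (fun n => Γ n - c * d n) Filter.atTop (nhds G) := by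
    have := hΓtend.sub (hdtend.const_mul c)
    simpa using this
  exact aux_contract (le_of_lt hα0) hα1 φ _ G hbtend hbrec

set_option maxHeartbeats 1000000 in
/-- Convergence of the inertial forward–backward algorithm: with `Φ`
self-adjoint and `δ`-coercive, `Ā` `β`-cocoercive, `B̄` maximally monotone with a nonempty
zero set of `Ā + B̄`, `α, ε ∈ (0,1)` with `2βδ(1 − 3α − ε) ≥ (1 − α)²` and `2βδ > 1`, the
inertial scheme `ϖ̃_k = ϖ_k + α(ϖ_k − ϖ_{k−1})`,
`Φ(ϖ̃_k − ϖ_{k+1}) − Ā(ϖ̃_k) ∈ B̄(ϖ_{k+1})` converges to a zero of `Ā + B̄`. -/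
theorem inertial_forward_backward_convergence
    (E : Type*) [NormedAddCommGroup E] [InnerProductSpace ℝ E] [FiniteDimensional ℝ E]
    (β δ α ε : ℝ) (hβ : 0 < β) (hδ : 0 < δ)
    (hα0 : 0 < α) (hα1 : α < 1) (hε0 : 0 < ε) (hε1 : ε < 1)
    (hstep : (1 - α) ^ 2 ≤ 2 * β * δ * (1 - 3 * α - ε)) (hβδ : 1 < 2 * β * δ)
    (Φ : E →ₗ[ℝ] E)
    (hsa : ∀ x y : E, ⟪Φ x, y⟫ = ⟪x, Φ y⟫)
    (hcoer : ∀ x : E, δ * ‖x‖ ^ 2 ≤ ⟪Φ x, x⟫)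
    (A : E → E)
    (hco : ∀ x y : E, β * ‖A x - A y‖ ^ 2 ≤ ⟪x - y, A x - A y⟫)
    (B : E → Set E)
    (hmono : ∀ x y : E, ∀ u ∈ B x, ∀ v ∈ B y, 0 ≤ ⟪x - y, u - v⟫)
    (hmax : ∀ (y : E) (v : E), (∀ (x : E), ∀ u ∈ B x, 0 ≤ ⟪x - y, u - v⟫) → v ∈ B y)
    (hzer : ∃ ϖ : E, -A ϖ ∈ B ϖ)
    (ϖ ϖt : ℕ → E)
    (hinertia : ∀ k : ℕ, 1 ≤ k → ϖt k = ϖ k + α • (ϖ k - ϖ (k - 1)))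
    (hseq : ∀ k : ℕ, 1 ≤ k → Φ (ϖt k - ϖ (k + 1)) - A (ϖt k) ∈ B (ϖ (k + 1))) :
    ∃ ϖstar : E, -A ϖstar ∈ B ϖstar ∧
      Filter.Tendsto ϖ Filter.atTop (nhds ϖstar) := by
  obtain ⟨x₀, hx₀⟩ := hzer
  obtain ⟨hdtend, L₀, hφ₀tend⟩ := aux_key E β δ α ε hβ hδ hα0 hα1 hε0 hstep hβδ Φ hsa hcoer
    A hco B hmono ϖ ϖt hinertia hseq (fun x => ⟪Φ x, x⟫) (fun x => rfl) x₀ hx₀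
  -- generic: quadratic form tends to zero implies sequence tends to zero
  have hzero : ∀ g : ℕ → E,
      Tendsto (fun n => ⟪Φ (g n), g n⟫) atTop (nhds 0) → Tendsto g atTop (nhds 0) := by
    intro g hg
    rw [tendsto_zero_iff_norm_tendsto_zero]
    have hup : Tendsto (fun n => Real.sqrt (⟪Φ (g n), g n⟫ / δ)) atTop (nhds 0) := by
      have := (hg.div_const δ).sqrt
      simpa using this
    refine tendsto_of_tendsto_of_tendsto_of_le_of_le tendsto_const_nhds hup
      (fun n => norm_nonneg _) (fun n => ?_)
    have h1 : δ * ‖g n‖ ^ 2 ≤ ⟪Φ (g n), g n⟫ := hcoer _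
    have h2 : ‖g n‖ ^ 2 ≤ ⟪Φ (g n), g n⟫ / δ := by
      rw [le_div_iff₀ hδ]; linarith
    calc ‖g n‖ = Real.sqrt (‖g n‖ ^ 2) := by rw [Real.sqrt_sq (norm_nonneg _)]
      _ ≤ _ := Real.sqrt_le_sqrt h2
  have hdiffE : Tendsto (fun n => ϖ (n + 1) - ϖ n) atTop (nhds 0) := hzero _ hdtend
  -- boundedness
  obtain ⟨C, hC⟩ : ∃ C, ∀ n, ⟪Φ (ϖ n - x₀), ϖ n - x₀⟫ ≤ C := by
    obtain ⟨C, hC⟩ := hφ₀tend.bddAbove_range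
    exact ⟨C, fun n => hC ⟨n, rfl⟩⟩
  set R : ℝ := Real.sqrt (C / δ) with hR
  have hmem : ∀ n, ϖ n ∈ Metric.closedBall x₀ R := by
    intro n
    rw [Metric.mem_closedBall, dist_eq_norm]
    have h1 : δ * ‖ϖ n - x₀‖ ^ 2 ≤ ⟪Φ (ϖ n - x₀), ϖ n - x₀⟫ := hcoer _
    have h2 : ‖ϖ n - x₀‖ ^ 2 ≤ C / δ := by
      rw [le_div_iff₀ hδ]; linarith [hC n]
    calc ‖ϖ n - x₀‖ = Real.sqrt (‖ϖ n - x₀‖ ^ 2) := by rw [Real.sqrt_sq (norm_nonneg _)]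
      _ ≤ R := Real.sqrt_le_sqrt h2
  haveI : ProperSpace E := FiniteDimensional.proper ℝ E
  obtain ⟨ϖs, _, ψ, hψmono, hψtend⟩ :=
    (isCompact_closedBall x₀ R).tendsto_subseq hmem
  have hψatTop : Tendsto ψ atTop atTop := hψmono.tendsto_atTop
  have hψ1atTop : Tendsto (fun j => ψ j + 1) atTop atTop :=
    (tendsto_add_atTop_nat 1).comp hψatTop
  have hdiffψ : Tendsto (fun j => ϖ (ψ j + 1) - ϖ (ψ j)) atTop (nhds 0) :=
    hdiffE.comp hψatTop
  have h1sub : Tendsto (fun j => ϖ (ψ j + 1)) atTop (nhds ϖs) := by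
    have h := hψtend.add hdiffψ
    rw [add_zero] at h
    refine h.congr fun j => ?_
    simp [Function.comp]
  have hdiffψ1 : Tendsto (fun j => ϖ (ψ j + 2) - ϖ (ψ j + 1)) atTop (nhds 0) := by
    have h := hdiffE.comp hψ1atTop
    refine h.congr fun j => ?_
    simp [Function.comp]
  have h2sub : Tendsto (fun j => ϖ (ψ j + 2)) atTop (nhds ϖs) := by
    have h := h1sub.add hdiffψ1
    rw [add_zero] at h
    refine h.congr fun j => ?_
    abel
  have hwt : Tendsto (fun j => ϖt (ψ j + 1)) atTop (nhds ϖs) := by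
    have h := h1sub.add (hdiffψ.const_smul α)
    rw [smul_zero, add_zero] at h
    refine h.congr fun j => ?_
    rw [hinertia (ψ j + 1) (by omega)]
    simp
  -- A is Lipschitz hence continuous along the subsequence
  have hALip : ∀ x y : E, ‖A x - A y‖ ≤ β⁻¹ * ‖x - y‖ := by
    intro x y
    rcases eq_or_ne (A x) (A y) with h | h
    · rw [h, sub_self, norm_zero]
      positivity
    · have hn : 0 < ‖A x - A y‖ := by
        rw [norm_pos_iff]; exact sub_ne_zero_of_ne h
      have h1 : β * ‖A x - A y‖ ^ 2 ≤ ‖x - y‖ * ‖A x - A y‖ :=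
        le_trans (hco x y) (real_inner_le_norm _ _)
      have h2 : β * ‖A x - A y‖ ≤ ‖x - y‖ := by
        have h3 : (β * ‖A x - A y‖) * ‖A x - A y‖ ≤ ‖x - y‖ * ‖A x - A y‖ := by
          nlinarith
        exact le_of_mul_le_mul_right h3 hn
      rw [inv_mul_eq_div, le_div_iff₀ hβ]
      nlinarith
  have hAcont : Tendsto (fun j => A (ϖt (ψ j + 1))) atTop (nhds (A ϖs)) := by
    rw [← tendsto_sub_nhds_zero_iff, tendsto_zero_iff_norm_tendsto_zero]
    have hnw : Tendsto (fun j => ‖ϖt (ψ j + 1) - ϖs‖) atTop (nhds 0) := by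
      rw [← tendsto_zero_iff_norm_tendsto_zero]
      rw [← tendsto_sub_nhds_zero_iff] at hwt
      exact hwt
    have hup : Tendsto (fun j => β⁻¹ * ‖ϖt (ψ j + 1) - ϖs‖) atTop (nhds 0) := by
      have := hnw.const_mul β⁻¹
      simpa using this
    exact tendsto_of_tendsto_of_tendsto_of_le_of_le tendsto_const_nhds hup
      (fun j => norm_nonneg _) (fun j => hALip _ _)
  have hΦcont : Continuous Φ := Φ.continuous_of_finiteDimensional
  have hargΦ : Tendsto (fun j => ϖt (ψ j + 1) - ϖ (ψ j + 2)) atTop (nhds 0) := by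
    have := hwt.sub h2sub
    simpa using this
  have hΦtend : Tendsto (fun j => Φ (ϖt (ψ j + 1) - ϖ (ψ j + 2))) atTop (nhds 0) := by
    have h := (hΦcont.tendsto 0).comp hargΦ
    rw [map_zero] at h
    exact h
  have hutend : Tendsto (fun j => Φ (ϖt (ψ j + 1) - ϖ (ψ j + 2)) - A (ϖt (ψ j + 1)))
      atTop (nhds (-A ϖs)) := by
    have := hΦtend.sub hAcont
    simpa using this
  have hϖszero : -A ϖs ∈ B ϖs := by
    apply hmax
    intro x u hu
    have hterm : ∀ j, 0 ≤ ⟪x - ϖ (ψ j + 2),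
        u - (Φ (ϖt (ψ j + 1) - ϖ (ψ j + 2)) - A (ϖt (ψ j + 1)))⟫ := fun j =>
      hmono x (ϖ (ψ j + 2)) u hu _ (hseq (ψ j + 1) (by omega))
    have hlim : Tendsto (fun j => ⟪x - ϖ (ψ j + 2),
        u - (Φ (ϖt (ψ j + 1) - ϖ (ψ j + 2)) - A (ϖt (ψ j + 1)))⟫) atTop
        (nhds ⟪x - ϖs, u - (-A ϖs)⟫) :=
      (tendsto_const_nhds.sub h2sub).inner (tendsto_const_nhds.sub hutend)
    exact ge_of_tendsto' hlim hterm
  refine ⟨ϖs, hϖszero, ?_⟩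
  obtain ⟨_, L, hφstend⟩ := aux_key E β δ α ε hβ hδ hα0 hα1 hε0 hstep hβδ Φ hsa hcoer
    A hco B hmono ϖ ϖt hinertia hseq (fun x => ⟪Φ x, x⟫) (fun x => rfl) ϖs hϖszero
  have hQc : Continuous (fun v : E => ⟪Φ v, v⟫) := hΦcont.inner continuous_id
  have harg : Tendsto (fun j => ϖ (ψ j) - ϖs) atTop (nhds 0) := by
    rw [← tendsto_sub_nhds_zero_iff] at hψtend
    exact hψtend
  have hsub0 : Tendsto (fun j => ⟪Φ (ϖ (ψ j) - ϖs), ϖ (ψ j) - ϖs⟫) atTop (nhds 0) := by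
    have h : Tendsto ((fun v : E => ⟪Φ v, v⟫) ∘ fun j => ϖ (ψ j) - ϖs) atTop (nhds 0) := by
      have := (hQc.tendsto 0).comp harg
      simpa using this
    exact h
  have hLsub : Tendsto (fun j => ⟪Φ (ϖ (ψ j) - ϖs), ϖ (ψ j) - ϖs⟫) atTop (nhds L) :=
    hφstend.comp hψatTop
  have hL0 : L = 0 := tendsto_nhds_unique hLsub hsub0
  rw [hL0] at hφstend
  have := hzero (fun n => ϖ n - ϖs) hφstend
  rwa [← tendsto_sub_nhds_zero_iff]
end

section
/- Let E be a finite-dimensional real inner product space, β, δ > 0, α > 0, Φ : E → E self-adjoint with ⟨Φx, x⟩ ≥ δ‖x‖² for all x, Ā : E → E β-cocoercive, and B̄ : E → Set E monotone. Suppose (ϖ_k), (ϖ̃_k) satisfy ϖ̃_k = ϖ_k + α(ϖ_k − ϖ_{k−1}) and Φ(ϖ̃_k − ϖ_{k+1}) − Ā(ϖ̃_k) ∈ B̄(ϖ_{k+1}), and let ϖ* satisfy −Ā(ϖ*) ∈ B̄(ϖ*). Then for every k: ‖ϖ_{k+1} − ϖ*‖_Φ² − ‖ϖ_k − ϖ*‖_Φ²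 − α(‖ϖ_k − ϖ*‖_Φ² − ‖ϖ_{k−1} − ϖ*‖_Φ²) ≤ −(1 − 1/(2βδ))‖ϖ_{k+1} − ϖ̃_k‖_Φ² + (α + α²)‖ϖ_k − ϖ_{k−1}‖_Φ². -/
open scoped RealInnerProductSpace

theorem ifb_aux
    (E : Type*) [NormedAddCommGroup E] [InnerProductSpace ℝ E]
    (β δ α : ℝ) (hβ : 0 < β) (hδ : 0 < δ)
    (Φ : E →ₗ[ℝ] E)
    (hsa : ∀ x y : E, ⟪Φ x, y⟫ = ⟪x, Φ y⟫)
    (hcoer : ∀ x : E, δ * ‖x‖ ^ 2 ≤ ⟪Φ x, x⟫)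
    (A : E → E)
    (x y s p q : E)
    (hy : y = p + α • (p - q))
    (hmem : 0 ≤ ⟪x - s, (Φ (y - x) - A y) - (-A s)⟫)
    (hAco : β * ‖A y - A s‖ ^ 2 ≤ ⟪y - s, A y - A s⟫) :
    ⟪Φ (x - s), x - s⟫ - ⟪Φ (p - s), p - s⟫ -
        α * (⟪Φ (p - s), p - s⟫ - ⟪Φ (q - s), q - s⟫) ≤
      -(1 - 1 / (2 * β * δ)) * ⟪Φ (x - y), x - y⟫ +
        (α + α ^ 2) * ⟪Φ (p - q), p - q⟫ := by
  have hsym : ∀ u v : E, ⟪Φ u, v⟫ = ⟪Φ v, u⟫ := fun u v => by rw [hsa, real_inner_comm]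
  have hsubQ : ∀ u v : E, ⟪Φ (u - v), u - v⟫
      = ⟪Φ u, u⟫ - 2 * ⟪Φ u, v⟫ + ⟪Φ v, v⟫ := by
    intro u v
    rw [map_sub, inner_sub_left, inner_sub_right, inner_sub_right, hsym v u]
    ring
  -- Step A : bound the cross term
  have hm : ⟪Φ (x - y), x - s⟫ + ⟪x - s, A y - A s⟫ ≤ 0 := by
    have e1 : ⟪x - s, (Φ (y - x) - A y) - (-A s)⟫
        = ⟪x - s, Φ (y - x)⟫ - ⟪x - s, A y - A s⟫ := by
      rw [inner_sub_right, inner_sub_right, inner_sub_right, inner_neg_right]; ring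
    have e2 : ⟪x - s, Φ (y - x)⟫ = -⟪Φ (x - y), x - s⟫ := by
      rw [show y - x = -(x - y) by abel, map_neg, inner_neg_right, real_inner_comm]
    rw [e1, e2] at hmem
    linarith
  have hsplit : ⟪y - s, A y - A s⟫ = ⟪y - x, A y - A s⟫ + ⟪x - s, A y - A s⟫ := by
    rw [show y - s = (y - x) + (x - s) by abel, inner_add_left]
  have hcs : ⟪y - x, A y - A s⟫ ≤ ‖y - x‖ * ‖A y - A s‖ := real_inner_le_norm _ _
  have h4βt : 4 * β * ⟪Φ (x - y), x - s⟫ ≤ ‖y - x‖ ^ 2 := by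
    nlinarith [sq_nonneg (‖y - x‖ - 2 * β * ‖A y - A s‖), hβ, hm, hcs, hAco, hsplit]
  have hδn : δ * ‖y - x‖ ^ 2 ≤ ⟪Φ (x - y), x - y⟫ := by
    have h := hcoer (y - x)
    rw [show y - x = -(x - y) by abel, map_neg, inner_neg_neg] at h
    rwa [show -(x - y) = y - x by abel] at h
  have hA : 4 * β * δ * ⟪Φ (x - y), x - s⟫ ≤ ⟪Φ (x - y), x - y⟫ := by
    nlinarith [mul_le_mul_of_nonneg_left h4βt hδ.le, hδn]
  have hbd : (0:ℝ) < 2 * β * δ := by positivity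
  have h2t : 2 * ⟪Φ (x - y), x - s⟫ ≤ 1 / (2 * β * δ) * ⟪Φ (x - y), x - y⟫ := by
    rw [div_mul_eq_mul_div, one_mul, le_div_iff₀ hbd]
    nlinarith [hA]
  -- Step B : Φ-norm identity splitting at y
  have hE1 : ⟪Φ (x - s), x - s⟫
      = ⟪Φ (x - y), x - y⟫ + 2 * ⟪Φ (x - y), y - s⟫ + ⟪Φ (y - s), y - s⟫ := by
    have h := hsubQ (x - y) (-(y - s))
    simp only [map_neg, inner_neg_left, inner_neg_right, inner_neg_neg] at h
    rw [show x - y - -(y - s) = x - s by abel] at h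
    linarith
  have hE2 : ⟪Φ (x - y), x - s⟫ = ⟪Φ (x - y), x - y⟫ + ⟪Φ (x - y), y - s⟫ := by
    rw [show x - s = (x - y) + (y - s) by abel, inner_add_right]
  -- Step C : expand ‖y - s‖_Φ²
  have hQ2 : ∀ (c d : ℝ) (u v : E), ⟪Φ (c • u - d • v), c • u - d • v⟫
      = c ^ 2 * ⟪Φ u, u⟫ - 2 * c * d * ⟪Φ u, v⟫ + d ^ 2 * ⟪Φ v, v⟫ := by
    intro c d u v
    simp only [map_sub, map_smul, inner_sub_left, inner_sub_right,
      real_inner_smul_left, real_inner_smul_right, hsym v u]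
    ring
  have hysv : y - s = (1 + α) • (p - s) - α • (q - s) := by
    rw [hy]; module
  have hE3 : ⟪Φ (y - s), y - s⟫ = (1 + α) ^ 2 * ⟪Φ (p - s), p - s⟫
      - 2 * (1 + α) * α * ⟪Φ (p - s), q - s⟫ + α ^ 2 * ⟪Φ (q - s), q - s⟫ := by
    rw [hysv]; exact hQ2 _ _ _ _
  have hE4 : ⟪Φ (p - q), p - q⟫ = ⟪Φ (p - s), p - s⟫
      - 2 * ⟪Φ (p - s), q - s⟫ + ⟪Φ (q - s), q - s⟫ := by
    have h := hsubQ (p - s) (q - s)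
    rwa [show p - s - (q - s) = p - q by abel] at h
  nlinarith [hE1, hE2, hE3, hE4, h2t]

/-- One-step energy inequality for the inertial forward–backward scheme:
`‖ϖ_{k+1} − ϖ*‖_Φ² − ‖ϖ_k − ϖ*‖_Φ² − α(‖ϖ_k − ϖ*‖_Φ² − ‖ϖ_{k−1} − ϖ*‖_Φ²)
  ≤ −(1 − 1/(2βδ))‖ϖ_{k+1} − ϖ̃_k‖_Φ² + (α + α²)‖ϖ_k − ϖ_{k−1}‖_Φ²`,
where `‖w‖_Φ² = ⟨Φw, w⟩`. -/
theorem inertial_forward_backward_one_step_inequality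
    (E : Type*) [NormedAddCommGroup E] [InnerProductSpace ℝ E] [FiniteDimensional ℝ E]
    (β δ α : ℝ) (hβ : 0 < β) (hδ : 0 < δ) (hα : 0 < α)
    (Φ : E →ₗ[ℝ] E)
    (hsa : ∀ x y : E, ⟪Φ x, y⟫ = ⟪x, Φ y⟫)
    (hcoer : ∀ x : E, δ * ‖x‖ ^ 2 ≤ ⟪Φ x, x⟫)
    (A : E → E)
    (hco : ∀ x y : E, β * ‖A x - A y‖ ^ 2 ≤ ⟪x - y, A x - A y⟫)
    (B : E → Set E)
    (hmono : ∀ x y : E, ∀ u ∈ B x, ∀ v ∈ B y, 0 ≤ ⟪x - y, u - v⟫)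
    (ϖ ϖt : ℕ → E)
    (hinertia : ∀ k : ℕ, 1 ≤ k → ϖt k = ϖ k + α • (ϖ k - ϖ (k - 1)))
    (hseq : ∀ k : ℕ, 1 ≤ k → Φ (ϖt k - ϖ (k + 1)) - A (ϖt k) ∈ B (ϖ (k + 1)))
    (ϖstar : E) (hstar : -A ϖstar ∈ B ϖstar) :
    ∀ k : ℕ, 1 ≤ k →
      ⟪Φ (ϖ (k + 1) - ϖstar), ϖ (k + 1) - ϖstar⟫ - ⟪Φ (ϖ k - ϖstar), ϖ k - ϖstar⟫ -
          α * (⟪Φ (ϖ k - ϖstar), ϖ k - ϖstar⟫ - ⟪Φ (ϖ (k - 1) - ϖstar), ϖ (k - 1) - ϖstar⟫) ≤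
        -(1 - 1 / (2 * β * δ)) * ⟪Φ (ϖ (k + 1) - ϖt k), ϖ (k + 1) - ϖt k⟫ +
          (α + α ^ 2) * ⟪Φ (ϖ k - ϖ (k - 1)), ϖ k - ϖ (k - 1)⟫ := by
  intro k hk
  exact ifb_aux E β δ α hβ hδ Φ hsa hcoer A (ϖ (k + 1)) (ϖt k) ϖstar (ϖ k) (ϖ (k - 1))
    (hinertia k hk)
    (hmono (ϖ (k + 1)) ϖstar _ (hseq k hk) _ hstar)
    (hco (ϖt k) ϖstar)
end

section
/- Let E be a finite-dimensional real inner product space, β, δ > 0, α ∈ (0, 1), ε ∈ (0, 1) with 2βδ(1 − 3α − ε) ≥ (1 − α)² and 2βδ > 1. Let Φ : E → E be self-adjoint with ⟨Φx, x⟩ ≥ δ‖x‖² for all x, Ā : E → E β-cocoercive, B̄ : E → Set E monotone, and suppose there exists ϖ* with −Ā(ϖ*) ∈ B̄(ϖ*). If (ϖ_k), (ϖ̃_k) satisfy ϖ̃_k = ϖ_k + α(ϖ_k − ϖ_{k−1}) and Φ(ϖ̃_k − ϖ_{k+1}) − Ā(ϖ̃_k) ∈ B̄(ϖ_{k+1})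 for all k ≥ 1, then the sequence (ϖ_k) is bounded, Σ_{k=1}^∞ ‖ϖ_{k+1} − ϖ_k‖_Φ² < ∞, and in particular ϖ_{k+1} − ϖ_k → 0. -/
open scoped RealInnerProductSpace
open Finset Filter Topology

/-!
Put `a k = ⟪Φ (ϖ k - ϖ*), ϖ k - ϖ*⟫` and `s k = ⟪Φ (ϖ (k+1) - ϖ k), ϖ (k+1) - ϖ k⟫`.
Cocoercivity of `A` and monotonicity of `B` make one forward–backward step `t ↦ z` decrease the
squared `Φ`-distance to the zero `ϖ*` of `A + B` by at least `σ ⟪Φ (t - z), t - z⟫`, where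
`σ = 1 - 1/(2βδ)`. Inserting the inertial point turns this into the Alvarez–Attouch recursion
`a (k+2) ≤ (1+α) a (k+1) - α a k + ρ s k - γ s (k+1)` with `ρ = α(1+α) + σα(1-α)` and
`γ = σ(1-α)`, and the step-size condition is exactly `ρ + ε ≤ γ`. Then the energy
`a (k+1) - α a k + ρ s k` drops by at least `ε s (k+1)` per step, which bounds `a` and makes `s`
summable.
-/

section Operators

variable {E : Type*} [NormedAddCommGroup E] [InnerProductSpace ℝ E]

def IsCocoercive (β : ℝ) (A : E → E) : Prop :=
  ∀ x y, β * ‖A x - A y‖ ^ 2 ≤ ⟪x - y, A x - A y⟫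

def IsMonotoneOperator (B : E → Set E) : Prop :=
  ∀ x y, ∀ u ∈ B x, ∀ v ∈ B y, 0 ≤ ⟪x - y, u - v⟫

theorem real_inner_le_mul_norm_sq_add_norm_sq_div {β : ℝ} (hβ : 0 < β) (w e : E) :
    ⟪w, e⟫ ≤ β * ‖e‖ ^ 2 + ‖w‖ ^ 2 / (4 * β) := by
  have hsq : β * ‖e‖ ^ 2 + ‖w‖ ^ 2 / (4 * β) - ‖w‖ * ‖e‖ = (‖w‖ - 2 * β * ‖e‖) ^ 2 / (4 * β) := by
    field_simp
    ring
  have : 0 ≤ (‖w‖ - 2 * β * ‖e‖) ^ 2 / (4 * β) := by positivity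
  linarith [real_inner_le_norm w e]

end Operators

namespace LinearMap.IsSymmetric

variable {E : Type*} [NormedAddCommGroup E] [InnerProductSpace ℝ E] {Φ : E →ₗ[ℝ] E}

theorem real_inner_map_comm (hΦ : Φ.IsSymmetric) (x y : E) : ⟪Φ x, y⟫ = ⟪Φ y, x⟫ := by
  rw [hΦ x y, real_inner_comm]

theorem inner_map_add_add (hΦ : Φ.IsSymmetric) (x y : E) :
    ⟪Φ (x + y), x + y⟫ = ⟪Φ x, x⟫ + 2 * ⟪Φ x, y⟫ + ⟪Φ y, y⟫ := by
  simp only [map_add, inner_add_left, inner_add_right]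
  rw [hΦ.real_inner_map_comm y x]
  ring

theorem inner_map_sub_sub (hΦ : Φ.IsSymmetric) (x y : E) :
    ⟪Φ (x - y), x - y⟫ = ⟪Φ x, x⟫ - 2 * ⟪Φ x, y⟫ + ⟪Φ y, y⟫ := by
  simp only [map_sub, inner_sub_left, inner_sub_right]
  rw [hΦ.real_inner_map_comm y x]
  ring

theorem inner_map_extrapolate (hΦ : Φ.IsSymmetric) (α : ℝ) (x y : E) :
    ⟪Φ ((1 + α) • x - α • y), (1 + α) • x - α • y⟫ =
      (1 + α) * ⟪Φ x, x⟫ - α * ⟪Φ y, y⟫ + α * (1 + α) * ⟪Φ (x - y), x - y⟫ := by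
  simp only [hΦ.inner_map_sub_sub, map_smul, real_inner_smul_left, real_inner_smul_right]
  ring

theorem two_mul_inner_map_le (hΦ : Φ.IsSymmetric) (hpos : ∀ x, 0 ≤ ⟪Φ x, x⟫) (x y : E) :
    2 * ⟪Φ x, y⟫ ≤ ⟪Φ x, x⟫ + ⟪Φ y, y⟫ := by
  linarith [hΦ.inner_map_sub_sub x y ▸ hpos (x - y)]

theorem inner_map_smul_sub_ge (hΦ : Φ.IsSymmetric) (hpos : ∀ x, 0 ≤ ⟪Φ x, x⟫) {α : ℝ}
    (hα : 0 ≤ α) (x y : E) :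
    (1 - α) * ⟪Φ y, y⟫ - α * (1 - α) * ⟪Φ x, x⟫ ≤ ⟪Φ (α • x - y), α • x - y⟫ := by
  have h := mul_le_mul_of_nonneg_left (hΦ.two_mul_inner_map_le hpos x y) hα
  rw [hΦ.inner_map_sub_sub]
  simp only [map_smul, real_inner_smul_left, real_inner_smul_right]
  nlinarith

end LinearMap.IsSymmetric

section ForwardBackward

variable {E : Type*} [NormedAddCommGroup E] [InnerProductSpace ℝ E] {Φ : E →ₗ[ℝ] E}
  {A : E → E} {B : E → Set E} {β δ : ℝ}

theorem inner_map_forwardBackward_le (hΦ : Φ.IsSymmetric) (hβ : 0 < β) (hδ : 0 < δ)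
    (hcoer : ∀ x : E, δ * ‖x‖ ^ 2 ≤ ⟪Φ x, x⟫) (hA : IsCocoercive β A)
    (hB : IsMonotoneOperator B) {xstar t z : E} (hstar : -A xstar ∈ B xstar)
    (hz : Φ (t - z) - A t ∈ B z) :
    ⟪Φ (z - xstar), z - xstar⟫ ≤
      ⟪Φ (t - xstar), t - xstar⟫ - (1 - 1 / (2 * β * δ)) * ⟪Φ (t - z), t - z⟫ := by
  set w := t - z with hw
  set e := A t - A xstar with he
  have hmon : ⟪z - xstar, e⟫ ≤ ⟪z - xstar, Φ w⟫ := by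
    have h := hB z xstar _ hz _ hstar
    rw [show Φ w - A t - -A xstar = Φ w - e by rw [he]; abel, inner_sub_right] at h
    linarith
  have hsplit : ⟪t - xstar, e⟫ = ⟪z - xstar, e⟫ + ⟪w, e⟫ := by
    rw [← inner_add_left, hw, sub_add_sub_cancel']
  have hcross : -(‖w‖ ^ 2 / (4 * β)) ≤ ⟪z - xstar, Φ w⟫ := by
    linarith [hA t xstar, real_inner_le_mul_norm_sq_add_norm_sq_div hβ w e]
  have hexpand : ⟪Φ (t - xstar), t - xstar⟫ =
      ⟪Φ (z - xstar), z - xstar⟫ + 2 * ⟪z - xstar, Φ w⟫ + ⟪Φ w, w⟫ := by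
    rw [← hΦ, ← hΦ.inner_map_add_add, hw, sub_add_sub_cancel']
  have hresidual : ‖w‖ ^ 2 / (2 * β) ≤ ⟪Φ w, w⟫ / (2 * β * δ) := by
    rw [div_le_div_iff₀ (by positivity) (by positivity)]
    nlinarith [hcoer w]
  have hhalf : ‖w‖ ^ 2 / (2 * β) = 2 * (‖w‖ ^ 2 / (4 * β)) := by ring
  have hσ : (1 - 1 / (2 * β * δ)) * ⟪Φ w, w⟫ = ⟪Φ w, w⟫ - ⟪Φ w, w⟫ / (2 * β * δ) := by ring
  linarith

theorem inner_map_inertialForwardBackward_le (hΦ : Φ.IsSymmetric) (hpos : ∀ x, 0 ≤ ⟪Φ x, x⟫)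
    (hβ : 0 < β) (hδ : 0 < δ) (hβδ : 1 ≤ 2 * β * δ) (hcoer : ∀ x : E, δ * ‖x‖ ^ 2 ≤ ⟪Φ x, x⟫)
    (hA : IsCocoercive β A) (hB : IsMonotoneOperator B) {α : ℝ} (hα : 0 ≤ α)
    {xstar x₀ x₁ x₂ : E} (hstar : -A xstar ∈ B xstar)
    (hstep : Φ (x₁ + α • (x₁ - x₀) - x₂) - A (x₁ + α • (x₁ - x₀)) ∈ B x₂) :
    ⟪Φ (x₂ - xstar), x₂ - xstar⟫ ≤
      (1 + α) * ⟪Φ (x₁ - xstar), x₁ - xstar⟫ - α * ⟪Φ (x₀ - xstar), x₀ - xstar⟫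
        + (α * (1 + α) + (1 - 1 / (2 * β * δ)) * α * (1 - α)) * ⟪Φ (x₁ - x₀), x₁ - x₀⟫
        - (1 - 1 / (2 * β * δ)) * (1 - α) * ⟪Φ (x₂ - x₁), x₂ - x₁⟫ := by
  set σ := 1 - 1 / (2 * β * δ)
  have hσ : 0 ≤ σ := sub_nonneg.mpr ((div_le_one (by positivity)).mpr hβδ)
  have hmain := inner_map_forwardBackward_le hΦ hβ hδ hcoer hA hB hstar hstep
  have hextra : x₁ + α • (x₁ - x₀) - xstar = (1 + α) • (x₁ - xstar) - α • (x₀ - xstar) := by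
    module
  have hres : x₁ + α • (x₁ - x₀) - x₂ = α • (x₁ - x₀) - (x₂ - x₁) := by module
  rw [hextra, hΦ.inner_map_extrapolate, sub_sub_sub_cancel_right, hres] at hmain
  have hlow := mul_le_mul_of_nonneg_left (hΦ.inner_map_smul_sub_ge hpos hα (x₁ - x₀) (x₂ - x₁)) hσ
  linarith

end ForwardBackward

theorem inertial_coeff_gap_of_step_condition {α ε c : ℝ} (hc : 0 < c)
    (hstep : (1 - α) ^ 2 ≤ c * (1 - 3 * α - ε)) :
    α * (1 + α) + (1 - 1 / c) * α * (1 - α) + ε ≤ (1 - 1 / c) * (1 - α) := by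
  have key : (1 - 1 / c) * (1 - α) - (α * (1 + α) + (1 - 1 / c) * α * (1 - α) + ε) =
      (c * (1 - 3 * α - ε) - (1 - α) ^ 2) / c := by
    field_simp
    ring
  have : 0 ≤ (c * (1 - 3 * α - ε) - (1 - α) ^ 2) / c := div_nonneg (by linarith) hc.le
  linarith

section InertialEnergy

variable {a s : ℕ → ℝ} {α ρ γ ε : ℝ}

def inertialEnergy (a s : ℕ → ℝ) (α ρ : ℝ) (k : ℕ) : ℝ :=
  a (k + 1) - α * a k + ρ * s k

variable (hs : ∀ k, 0 ≤ s k) (hgap : ρ + ε ≤ γ)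
  (hrec : ∀ k, a (k + 2) ≤ (1 + α) * a (k + 1) - α * a k + ρ * s k - γ * s (k + 1))
include hs hgap hrec

theorem inertialEnergy_succ_add_le (k : ℕ) :
    inertialEnergy a s α ρ (k + 1) + ε * s (k + 1) ≤ inertialEnergy a s α ρ k := by
  have := mul_le_mul_of_nonneg_right hgap (hs (k + 1))
  simp only [inertialEnergy]
  linarith [hrec k]

theorem inertialEnergy_add_sum_le (n : ℕ) :
    inertialEnergy a s α ρ n + ε * ∑ i ∈ range n, s (i + 1) ≤ inertialEnergy a s α ρ 0 := by
  induction n with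
  | zero => simp
  | succ n ih =>
    rw [sum_range_succ, mul_add]
    linarith [inertialEnergy_succ_add_le hs hgap hrec n]

theorem le_max_of_inertial_recursion (hα₀ : 0 ≤ α) (hα₁ : α < 1) (hρ : 0 ≤ ρ) (hε : 0 ≤ ε)
    (k : ℕ) : a k ≤ max (a 0) (inertialEnergy a s α ρ 0 / (1 - α)) := by
  set M := max (a 0) (inertialEnergy a s α ρ 0 / (1 - α))
  have hM : inertialEnergy a s α ρ 0 ≤ (1 - α) * M := by
    rw [← div_le_iff₀' (by linarith)]
    exact le_max_right _ _
  induction k with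
  | zero => exact le_max_left _ _
  | succ n ih =>
    have hdecay := inertialEnergy_add_sum_le hs hgap hrec n
    have hsum : 0 ≤ ε * ∑ i ∈ range n, s (i + 1) :=
      mul_nonneg hε (sum_nonneg fun i _ => hs (i + 1))
    have := mul_le_mul_of_nonneg_left ih hα₀
    have := mul_nonneg hρ (hs n)
    simp only [inertialEnergy] at hdecay hM ⊢
    linarith

theorem summable_of_inertial_recursion (ha : ∀ k, 0 ≤ a k) (hα₀ : 0 ≤ α) (hα₁ : α < 1)
    (hρ : 0 ≤ ρ) (hε : 0 < ε) : Summable s := by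
  set M := max (a 0) (inertialEnergy a s α ρ 0 / (1 - α))
  have hlow : ∀ n, -(α * M) ≤ inertialEnergy a s α ρ n := fun n => by
    have hbound := le_max_of_inertial_recursion hs hgap hrec hα₀ hα₁ hρ hε.le n
    have := mul_le_mul_of_nonneg_left hbound hα₀
    have := mul_nonneg hρ (hs n)
    simp only [inertialEnergy]
    linarith [ha (n + 1)]
  refine (summable_nat_add_iff 1).mp <| summable_of_sum_range_le (fun i => hs (i + 1))
    (c := (inertialEnergy a s α ρ 0 + α * M) / ε) fun n => ?_
  rw [le_div_iff₀' hε]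
  linarith [inertialEnergy_add_sum_le hs hgap hrec n, hlow n]

end InertialEnergy

section Coercive

variable {E : Type*} [NormedAddCommGroup E] [InnerProductSpace ℝ E] {Φ : E →ₗ[ℝ] E} {δ : ℝ}

theorem norm_le_sqrt_inner_map_self_div (hδ : 0 < δ) (hcoer : ∀ x : E, δ * ‖x‖ ^ 2 ≤ ⟪Φ x, x⟫)
    (x : E) : ‖x‖ ≤ √(⟪Φ x, x⟫ / δ) :=
  Real.le_sqrt_of_sq_le <| (le_div_iff₀ hδ).mpr (by linarith [hcoer x])

theorem norm_le_of_inner_map_sub_le (hδ : 0 < δ) (hcoer : ∀ x : E, δ * ‖x‖ ^ 2 ≤ ⟪Φ x, x⟫)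
    {x y : E} {M : ℝ} (h : ⟪Φ (x - y), x - y⟫ ≤ M) : ‖x‖ ≤ ‖y‖ + √(M / δ) :=
  calc ‖x‖ ≤ ‖y‖ + ‖x - y‖ := norm_le_norm_add_norm_sub' x y
    _ ≤ ‖y‖ + √(M / δ) := by
      gcongr
      exact (norm_le_sqrt_inner_map_self_div hδ hcoer _).trans
        (Real.sqrt_le_sqrt (div_le_div_of_nonneg_right h hδ.le))

theorem tendsto_zero_of_summable_inner_map (hδ : 0 < δ)
    (hcoer : ∀ x : E, δ * ‖x‖ ^ 2 ≤ ⟪Φ x, x⟫) {d : ℕ → E}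
    (h : Summable fun k => ⟪Φ (d k), d k⟫) : Tendsto d atTop (𝓝 0) := by
  have hsqrt : Tendsto (fun k => √(⟪Φ (d k), d k⟫ / δ)) atTop (𝓝 0) := by
    simpa using ((h.tendsto_atTop_zero.div_const δ).sqrt)
  exact tendsto_zero_iff_norm_tendsto_zero.mpr <| squeeze_zero (fun _ => norm_nonneg _)
    (fun k => norm_le_sqrt_inner_map_self_div hδ hcoer (d k)) hsqrt

end Coercive

theorem inertial_forward_backward_summable_increments_general
    (E : Type*) [NormedAddCommGroup E] [InnerProductSpace ℝ E]
    (β δ α ε : ℝ) (hβ : 0 < β) (hδ : 0 < δ)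
    (hα0 : 0 < α) (hα1 : α < 1) (hε0 : 0 < ε)
    (hstep : (1 - α) ^ 2 ≤ 2 * β * δ * (1 - 3 * α - ε)) (hβδ : 1 < 2 * β * δ)
    (Φ : E →ₗ[ℝ] E)
    (hsa : ∀ x y : E, ⟪Φ x, y⟫ = ⟪x, Φ y⟫)
    (hcoer : ∀ x : E, δ * ‖x‖ ^ 2 ≤ ⟪Φ x, x⟫)
    (A : E → E)
    (hco : ∀ x y : E, β * ‖A x - A y‖ ^ 2 ≤ ⟪x - y, A x - A y⟫)
    (B : E → Set E)
    (hmono : ∀ x y : E, ∀ u ∈ B x, ∀ v ∈ B y, 0 ≤ ⟪x - y, u - v⟫)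
    (ϖstar : E) (hstar : -A ϖstar ∈ B ϖstar)
    (ϖ ϖt : ℕ → E)
    (hinertia : ∀ k : ℕ, 1 ≤ k → ϖt k = ϖ k + α • (ϖ k - ϖ (k - 1)))
    (hseq : ∀ k : ℕ, 1 ≤ k → Φ (ϖt k - ϖ (k + 1)) - A (ϖt k) ∈ B (ϖ (k + 1))) :
    (∃ C : ℝ, ∀ k : ℕ, ‖ϖ k‖ ≤ C) ∧
      Summable (fun k : ℕ => ⟪Φ (ϖ (k + 1) - ϖ k), ϖ (k + 1) - ϖ k⟫) ∧
      Filter.Tendsto (fun k : ℕ => ϖ (k + 1) - ϖ k) Filter.atTop (nhds 0) := by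
  have hpos : ∀ x, 0 ≤ ⟪Φ x, x⟫ := fun x => (by positivity : 0 ≤ δ * ‖x‖ ^ 2).trans (hcoer x)
  set σ := 1 - 1 / (2 * β * δ)
  have hσ : 0 ≤ σ := sub_nonneg.mpr ((div_le_one (by positivity)).mpr hβδ.le)
  have hρ : 0 ≤ α * (1 + α) + σ * α * (1 - α) :=
    add_nonneg (by positivity) (mul_nonneg (mul_nonneg hσ hα0.le) (by linarith))
  set a : ℕ → ℝ := fun k => ⟪Φ (ϖ k - ϖstar), ϖ k - ϖstar⟫
  set s : ℕ → ℝ := fun k => ⟪Φ (ϖ (k + 1) - ϖ k), ϖ (k + 1) - ϖ k⟫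
  have hrec (k : ℕ) :
      a (k + 2) ≤ (1 + α) * a (k + 1) - α * a k + (α * (1 + α) + σ * α * (1 - α)) * s k
        - σ * (1 - α) * s (k + 1) := by
    have h := hseq (k + 1) (Nat.le_add_left 1 k)
    rw [hinertia (k + 1) (Nat.le_add_left 1 k), Nat.add_sub_cancel] at h
    exact inner_map_inertialForwardBackward_le hsa hpos hβ hδ hβδ.le hcoer hco hmono hα0.le hstar h
  have hgap := inertial_coeff_gap_of_step_condition (by positivity) hstep
  have hs (k : ℕ) : 0 ≤ s k := hpos _
  have hsum := summable_of_inertial_recursion hs hgap hrec (fun k => hpos _) hα0.le hα1 hρ hε0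
  have hbound (k : ℕ) := le_max_of_inertial_recursion hs hgap hrec hα0.le hα1 hρ hε0.le k
  exact ⟨⟨_, fun k => norm_le_of_inner_map_sub_le hδ hcoer (hbound k)⟩, hsum,
    tendsto_zero_of_summable_inner_map hδ hcoer hsum⟩

/-- Under the step-size condition `2βδ(1 − 3α − ε) ≥ (1 − α)²`, `2βδ > 1`,
the inertial forward–backward sequence is bounded, the `Φ`-norm-squared increments are
summable, and consecutive differences tend to zero. -/
theorem inertial_forward_backward_summable_increments
    (E : Type*) [NormedAddCommGroup E] [InnerProductSpace ℝ E] [FiniteDimensional ℝ E]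
    (β δ α ε : ℝ) (hβ : 0 < β) (hδ : 0 < δ)
    (hα0 : 0 < α) (hα1 : α < 1) (hε0 : 0 < ε) (hε1 : ε < 1)
    (hstep : (1 - α) ^ 2 ≤ 2 * β * δ * (1 - 3 * α - ε)) (hβδ : 1 < 2 * β * δ)
    (Φ : E →ₗ[ℝ] E)
    (hsa : ∀ x y : E, ⟪Φ x, y⟫ = ⟪x, Φ y⟫)
    (hcoer : ∀ x : E, δ * ‖x‖ ^ 2 ≤ ⟪Φ x, x⟫)
    (A : E → E)
    (hco : ∀ x y : E, β * ‖A x - A y‖ ^ 2 ≤ ⟪x - y, A x - A y⟫)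
    (B : E → Set E)
    (hmono : ∀ x y : E, ∀ u ∈ B x, ∀ v ∈ B y, 0 ≤ ⟪x - y, u - v⟫)
    (ϖstar : E) (hstar : -A ϖstar ∈ B ϖstar)
    (ϖ ϖt : ℕ → E)
    (hinertia : ∀ k : ℕ, 1 ≤ k → ϖt k = ϖ k + α • (ϖ k - ϖ (k - 1)))
    (hseq : ∀ k : ℕ, 1 ≤ k → Φ (ϖt k - ϖ (k + 1)) - A (ϖt k) ∈ B (ϖ (k + 1))) :
    (∃ C : ℝ, ∀ k : ℕ, ‖ϖ k‖ ≤ C) ∧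
      Summable (fun k : ℕ => ⟪Φ (ϖ (k + 1) - ϖ k), ϖ (k + 1) - ϖ k⟫) ∧
      Filter.Tendsto (fun k : ℕ => ϖ (k + 1) - ϖ k) Filter.atTop (nhds 0) :=
  inertial_forward_backward_summable_increments_general E β δ α ε hβ hδ hα0 hα1 hε0 hstep hβδ Φ hsa
    hcoer A hco B hmono ϖstar hstar ϖ ϖt hinertia hseq
end

section
/- Let (a_k)_{k≥0} be a sequence of nonnegative real numbers, let (ψ_k)_{k≥1} be a sequence of nonnegative reals with Σ_{k=1}^∞ ψ_k < ∞, let α ∈ (0, 1), and define ϕ_k = max{0, a_k − a_{k−1}} for k ≥ 1. If ϕ_{k+1} ≤ α ϕ_k + ψ_k for all k ≥ 1, then Σ_{k=1}^∞ ϕ_k < ∞ and the sequence (a_k) converges. -/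
/-- Real-sequence convergence lemma: if the positive variations
`ϕ_k = max{0, a_k − a_{k−1}}` of a nonnegative sequence `(a_k)` satisfy
`ϕ_{k+1} ≤ α ϕ_k + ψ_k` with `α ∈ (0,1)` and `Σ ψ_k < ∞`, then `Σ ϕ_k < ∞` and `(a_k)`
converges. -/
theorem summable_positive_variations_converges
    (a : ℕ → ℝ) (ha : ∀ k, 0 ≤ a k)
    (ψ : ℕ → ℝ) (hψ : ∀ k, 0 ≤ ψ k) (hψsum : Summable ψ)
    (α : ℝ) (hα0 : 0 < α) (hα1 : α < 1)
    (hrec : ∀ k, 1 ≤ k →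
      max 0 (a (k + 1) - a k) ≤ α * max 0 (a k - a (k - 1)) + ψ k) :
    Summable (fun k => max 0 (a k - a (k - 1))) ∧
      ∃ l : ℝ, Filter.Tendsto a Filter.atTop (nhds l) := by
  set φ : ℕ → ℝ := fun k => max 0 (a k - a (k - 1)) with hφdef
  have hφ0 : φ 0 = 0 := by simp [hφdef]
  have hφnn : ∀ k, 0 ≤ φ k := fun k => le_max_left _ _
  set Ψ := ∑' k, ψ k with hΨ
  have hΨnn : 0 ≤ Ψ := tsum_nonneg hψ
  have h1α : (0:ℝ) < 1 - α := by linarith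
  have hC : 0 ≤ (φ 1 + Ψ) / (1 - α) := div_nonneg (by have := hφnn 1; linarith) h1α.le
  have key : ∀ N, ∑ k ∈ Finset.range N, φ k ≤ (φ 1 + Ψ) / (1 - α) := by
    intro N
    match N with
    | 0 => simpa using hC
    | 1 => simpa [hφ0] using hC
    | (M+2) =>
      have h1 : ∑ k ∈ Finset.range (M+2), φ k = ∑ k ∈ Finset.range (M+1), φ (k+1) := by
        rw [Finset.sum_range_succ']; simp [hφ0]
      have h2 : ∑ k ∈ Finset.range (M+1), φ (k+1) = (∑ k ∈ Finset.range M, φ (k+2)) + φ 1 := by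
        rw [Finset.sum_range_succ']
      have h3 : ∑ k ∈ Finset.range M, φ (k+2) ≤
          α * ∑ k ∈ Finset.range M, φ (k+1) + ∑ k ∈ Finset.range M, ψ (k+1) := by
        rw [Finset.mul_sum, ← Finset.sum_add_distrib]
        apply Finset.sum_le_sum
        intro i _
        have h := hrec (i+1) (by omega)
        simpa [hφdef] using h
      have h4 : ∑ k ∈ Finset.range M, ψ (k+1) ≤ Ψ := by
        have e : ∑ k ∈ Finset.range (M+1), ψ k
            = (∑ k ∈ Finset.range M, ψ (k+1)) + ψ 0 := Finset.sum_range_succ' _ _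
        have h5 : ∑ k ∈ Finset.range (M+1), ψ k ≤ Ψ :=
          Summable.sum_le_tsum _ (fun i _ => hψ i) hψsum
        have := hψ 0
        linarith
      have h5 : ∑ k ∈ Finset.range M, φ (k+1) ≤ ∑ k ∈ Finset.range (M+1), φ (k+1) :=
        Finset.sum_le_sum_of_subset_of_nonneg
          (Finset.range_subset_range.mpr (by omega)) (fun i _ _ => hφnn _)
      set S := ∑ k ∈ Finset.range (M+1), φ (k+1) with hS
      have hineq : S ≤ α * S + Ψ + φ 1 := by
        rw [h2]
        nlinarith [hα0.le]
      rw [h1, le_div_iff₀ h1α]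
      nlinarith
  have hsum : Summable φ := summable_of_sum_range_le hφnn key
  refine ⟨hsum, ?_⟩
  set P : ℕ → ℝ := fun n => ∑ k ∈ Finset.range (n+1), φ k with hP
  set b : ℕ → ℝ := fun n => a n - P n with hb
  have hbanti : Antitone b := by
    apply antitone_nat_of_succ_le
    intro n
    have h1 : a (n+1) - a n ≤ φ (n+1) := by
      have : a (n+1) - a ((n+1) - 1) ≤ φ (n+1) := le_max_right _ _
      simpa using this
    have h2 : P (n+1) = P n + φ (n+1) := Finset.sum_range_succ _ _
    simp only [hb]
    rw [h2]; linarith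
  have hbdd : BddBelow (Set.range b) := by
    refine ⟨-(∑' k, φ k), ?_⟩
    rintro x ⟨n, rfl⟩
    have h1 : P n ≤ ∑' k, φ k := Summable.sum_le_tsum _ (fun i _ => hφnn i) hsum
    have := ha n
    simp only [hb]
    linarith
  have hbconv : Filter.Tendsto b Filter.atTop (nhds (⨅ n, b n)) :=
    tendsto_atTop_ciInf hbanti hbdd
  have hPconv : Filter.Tendsto P Filter.atTop (nhds (∑' k, φ k)) := by
    have h := hsum.hasSum.tendsto_sum_nat
    exact h.comp (Filter.tendsto_add_atTop_nat 1)
  refine ⟨(⨅ n, b n) + ∑' k, φ k, ?_⟩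
  have : a = fun n => b n + P n := by
    funext n; simp [hb]
  rw [this]
  exact hbconv.add hPconv
end

section
/- Let m, N ≥ 1, let A_i ∈ ℝ^{m×n_i} for i = 1, …, N, and let D ∈ ℝ^{m×m} be a diagonal matrix with nonnegative diagonal entries. Then the block matrix Q ∈ ℝ^{n×n} (n = Σ n_i) with diagonal blocks Q_{ii} = 2 A_iᵀ D A_i and off-diagonal blocks Q_{ij} = A_iᵀ D A_j (i ≠ j) is positive semidefinite; indeed Q = diag{A_1ᵀ D A_1, …, A_Nᵀ D A_N} + Sᵀ S where S = [√D A_1, …, √D A_N] and √D is the entrywise square root of D. -/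
open scoped Matrix

noncomputable section

/-! Every block `A_iᵀ D A_j` is the `(i, j)` block of the Gram matrix `Sᵀ S`, so `Q` is `Sᵀ S` plus
its block-diagonal part. That part is the Hadamard product of `Sᵀ S` with the block indicator
`[i = j]`, a submatrix of the identity, hence positive semidefinite by the Schur product theorem. -/

namespace Matrix

theorem transpose_mul_diagonal_mul_apply {l m n R : Type*} [Fintype m] [DecidableEq m]
    [Semiring R] (A : Matrix m l R) (d : m → R) (B : Matrix m n R) (i : l) (j : n) :
    (Aᵀ * diagonal d * B) i j = ∑ k, A k i * d k * B k j := by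
  simp only [mul_apply (M := Aᵀ * diagonal d), mul_diagonal, transpose_apply]

open scoped ComplexOrder in
theorem PosSemidef.hadamard_submatrix_one {ι κ 𝕜 : Type*} [DecidableEq κ] [RCLike 𝕜]
    {M : Matrix ι ι 𝕜} (hM : M.PosSemidef) (f : ι → κ) :
    ((1 : Matrix κ κ 𝕜).submatrix f f ⊙ M).PosSemidef :=
  (PosSemidef.one.submatrix f).hadamard hM

end Matrix

theorem cournot_pseudogradient_matrix_posSemidef_general
    (m N : ℕ) (n : Fin N → ℕ)
    (A : ∀ i : Fin N, Matrix (Fin m) (Fin (n i)) ℝ)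
    (D : Fin m → ℝ) (hD : ∀ k, 0 ≤ D k)
    (Q : Matrix (Σ i : Fin N, Fin (n i)) (Σ i : Fin N, Fin (n i)) ℝ)
    (hQ : ∀ p q : Σ i : Fin N, Fin (n i),
      Q p q = (if p.1 = q.1 then 2 else 1) *
        ((A p.1)ᵀ * Matrix.diagonal D * A q.1) p.2 q.2)
    (S : Matrix (Fin m) (Σ i : Fin N, Fin (n i)) ℝ)
    (hS : ∀ (k : Fin m) (p : Σ i : Fin N, Fin (n i)),
      S k p = Real.sqrt (D k) * A p.1 k p.2) :
    Q = Matrix.of (fun p q : Σ i : Fin N, Fin (n i) =>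
        if p.1 = q.1 then ((A p.1)ᵀ * Matrix.diagonal D * A q.1) p.2 q.2 else 0) +
        Sᵀ * S ∧
      Q.PosSemidef := by
  have gram : ∀ p q, (Sᵀ * S) p q = ((A p.1)ᵀ * Matrix.diagonal D * A q.1) p.2 q.2 := by
    intro p q
    rw [Matrix.mul_apply, Matrix.transpose_mul_diagonal_mul_apply]
    refine Finset.sum_congr rfl fun k _ => ?_
    rw [Matrix.transpose_apply, hS, hS]
    linear_combination A p.1 k p.2 * A q.1 k q.2 * Real.mul_self_sqrt (hD k)
  have decomp : Q = Matrix.of (fun p q : Σ i : Fin N, Fin (n i) =>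
      if p.1 = q.1 then ((A p.1)ᵀ * Matrix.diagonal D * A q.1) p.2 q.2 else 0) + Sᵀ * S := by
    ext p q
    rw [hQ, Matrix.add_apply, Matrix.of_apply, gram]
    split_ifs <;> ring
  have blockDiag : Matrix.of (fun p q : Σ i : Fin N, Fin (n i) =>
      if p.1 = q.1 then ((A p.1)ᵀ * Matrix.diagonal D * A q.1) p.2 q.2 else 0) =
      (1 : Matrix (Fin N) (Fin N) ℝ).submatrix Sigma.fst Sigma.fst ⊙ (Sᵀ * S) := by
    ext p q
    simp only [Matrix.of_apply, Matrix.hadamard_apply, Matrix.submatrix_apply, Matrix.one_apply,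
      gram, ite_mul, one_mul, zero_mul]
  have gramPSD : (Sᵀ * S).PosSemidef := Matrix.posSemidef_conjTranspose_mul_self S
  refine ⟨decomp, ?_⟩
  rw [decomp, blockDiag]
  exact (Matrix.PosSemidef.hadamard_submatrix_one gramPSD Sigma.fst).add gramPSD

/-- The block matrix `Q` with diagonal blocks `2 A_iᵀ D A_i` and
off-diagonal blocks `A_iᵀ D A_j` decomposes as
`Q = diag{A_1ᵀ D A_1, …, A_Nᵀ D A_N} + Sᵀ S` with `S = [√D A_1, …, √D A_N]`, and in
particular `Q` is positive semidefinite. -/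
theorem cournot_pseudogradient_matrix_posSemidef
    (m N : ℕ) (hm : 1 ≤ m) (hN : 1 ≤ N) (n : Fin N → ℕ)
    (A : ∀ i : Fin N, Matrix (Fin m) (Fin (n i)) ℝ)
    (D : Fin m → ℝ) (hD : ∀ k, 0 ≤ D k)
    (Q : Matrix (Σ i : Fin N, Fin (n i)) (Σ i : Fin N, Fin (n i)) ℝ)
    (hQ : ∀ p q : Σ i : Fin N, Fin (n i),
      Q p q = (if p.1 = q.1 then 2 else 1) *
        ((A p.1)ᵀ * Matrix.diagonal D * A q.1) p.2 q.2)
    (S : Matrix (Fin m) (Σ i : Fin N, Fin (n i)) ℝ)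
    (hS : ∀ (k : Fin m) (p : Σ i : Fin N, Fin (n i)),
      S k p = Real.sqrt (D k) * A p.1 k p.2) :
    Q = Matrix.of (fun p q : Σ i : Fin N, Fin (n i) =>
        if p.1 = q.1 then ((A p.1)ᵀ * Matrix.diagonal D * A q.1) p.2 q.2 else 0) +
        Sᵀ * S ∧
      Q.PosSemidef :=
  cournot_pseudogradient_matrix_posSemidef_general m N n A D hD Q hQ S hS

end
end
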